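/- arXiv:1907.09660 — 6 statements merged into one kernel-verified Lean document; each statement's English description precedes it below -/
import Mathlib

section
/- With the setup above (0 < a_k < 1, |d_k| < 1, at least two d_k ≠ 0, and β(q) defined by ∑_{k: d_k≠0} |d_k|^q a_k^{β(q)} = 1), the function q ↦ β(q) is strictly decreasing and convex on ℝ. -/
/-!
Write `F q b = ∑ |d k| ^ q * a k ^ b`, so that `β` is the implicit function of `F q b = 1`.
All bases lie in `(0, 1)`, so `F` is strictly decreasing in each variable, and this makes `β`
strictly decreasing. Each term `exp (q log |d k| + b log a k)` is jointly convex in `(q, b)`,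
so `{F ≤ 1}`, which is the epigraph of `β`, is convex.
-/

open Real Finset

theorem strictAnti_of_apply_eq_const {F : ℝ → ℝ → ℝ} {β : ℝ → ℝ} {C : ℝ}
    (hF₁ : ∀ b, StrictAnti (F · b)) (hF₂ : ∀ q, StrictAnti (F q))
    (hβ : ∀ q, F q (β q) = C) : StrictAnti β := by
  intro q₁ q₂ hq
  have : F q₁ (β q₁) < F q₁ (β q₂) := by
    rw [hβ q₁, ← hβ q₂]
    exact hF₁ _ hq
  exact (hF₂ q₁).lt_iff_gt.mp this

theorem convexOn_of_apply_eq_const {F : ℝ → ℝ → ℝ} {β : ℝ → ℝ} {C : ℝ}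
    (hF₂ : ∀ q, StrictAnti (F q)) (hF : ConvexOn ℝ Set.univ (Function.uncurry F))
    (hβ : ∀ q, F q (β q) = C) : ConvexOn ℝ Set.univ β := by
  refine ⟨convex_univ, fun x _ y _ t u ht hu htu => ?_⟩
  have := hF.2 (Set.mem_univ (x, β x)) (Set.mem_univ (y, β y)) ht hu htu
  simp only [Prod.smul_mk, Prod.mk_add_mk, Function.uncurry_apply_pair, hβ] at this
  rw [← add_smul, htu, one_smul, ← hβ (t • x + u • y)] at this
  exact (hF₂ _).le_iff_ge.mp this

theorem strictAnti_sum_mul_rpow {ι : Type*} {s : Finset ι} (hs : s.Nonempty) {w x : ι → ℝ}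
    (hw : ∀ k ∈ s, 0 < w k) (hx : ∀ k ∈ s, 0 < x k ∧ x k < 1) :
    StrictAnti fun t : ℝ => ∑ k ∈ s, w k * x k ^ t := fun _ _ h =>
  sum_lt_sum_of_nonempty hs fun k hk =>
    mul_lt_mul_of_pos_left (rpow_lt_rpow_of_exponent_gt (hx k hk).1 (hx k hk).2 h) (hw k hk)

theorem convexOn_rpow_mul_rpow {c a : ℝ} (hc : 0 < c) (ha : 0 < a) :
    ConvexOn ℝ Set.univ fun p : ℝ × ℝ => c ^ p.1 * a ^ p.2 := by
  set g := log c • LinearMap.fst ℝ ℝ ℝ + log a • LinearMap.snd ℝ ℝ ℝ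
  have h : (fun p : ℝ × ℝ => c ^ p.1 * a ^ p.2) = exp ∘ g := by
    ext p
    simp [g, rpow_def_of_pos hc, rpow_def_of_pos ha, ← exp_add, mul_comm]
  rw [h]
  simpa using convexOn_exp.comp_linearMap g

theorem convexOn_sum_rpow_mul_rpow {ι : Type*} (s : Finset ι) {c a : ι → ℝ}
    (hc : ∀ k ∈ s, 0 < c k) (ha : ∀ k ∈ s, 0 < a k) :
    ConvexOn ℝ Set.univ fun p : ℝ × ℝ => ∑ k ∈ s, c k ^ p.1 * a k ^ p.2 := by
  refine ⟨convex_univ, fun p _ p' _ t u ht hu htu => ?_⟩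
  simp only [smul_eq_mul, mul_sum, ← sum_add_distrib]
  exact sum_le_sum fun k hk =>
    (convexOn_rpow_mul_rpow (hc k hk) (ha k hk)).2 (Set.mem_univ p) (Set.mem_univ p') ht hu htu

theorem stmt_3_general (r : ℕ) (a d : Fin r → ℝ)
    (ha : ∀ k, 0 < a k ∧ a k < 1) (hd : ∀ k, |d k| < 1)
    (β : ℝ → ℝ)
    (hβ : ∀ q : ℝ, ∑ k ∈ univ.filter (fun k => d k ≠ 0), |d k| ^ q * a k ^ β q = 1) :
    StrictAnti β ∧ ConvexOn ℝ Set.univ β := by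
  set S := univ.filter fun k => d k ≠ 0
  have hS : S.Nonempty := nonempty_of_sum_ne_zero ((hβ 0).trans_ne one_ne_zero)
  have hd₀ : ∀ k ∈ S, 0 < |d k| := fun k hk => abs_pos.mpr (mem_filter.mp hk).2
  have hF₁ : ∀ b : ℝ, StrictAnti fun q : ℝ => ∑ k ∈ S, |d k| ^ q * a k ^ b := fun b => by
    simpa only [mul_comm] using strictAnti_sum_mul_rpow hS
      (fun k _ => rpow_pos_of_pos (ha k).1 b) fun k hk => ⟨hd₀ k hk, hd k⟩
  have hF₂ : ∀ q : ℝ, StrictAnti fun b : ℝ => ∑ k ∈ S, |d k| ^ q * a k ^ b := fun q =>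
    strictAnti_sum_mul_rpow hS (fun k hk => rpow_pos_of_pos (hd₀ k hk) q) fun k _ => ha k
  have hF : ConvexOn ℝ Set.univ (Function.uncurry fun q b : ℝ => ∑ k ∈ S, |d k| ^ q * a k ^ b) :=
    convexOn_sum_rpow_mul_rpow S hd₀ fun k _ => (ha k).1
  exact ⟨strictAnti_of_apply_eq_const hF₁ hF₂ hβ, convexOn_of_apply_eq_const hF₂ hF hβ⟩

theorem stmt_3 (r : ℕ) (a d : Fin r → ℝ)
    (ha : ∀ k, 0 < a k ∧ a k < 1) (hd : ∀ k, |d k| < 1)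
    (h2 : 2 ≤ (univ.filter fun k => d k ≠ 0).card)
    (β : ℝ → ℝ)
    (hβ : ∀ q : ℝ, ∑ k ∈ univ.filter (fun k => d k ≠ 0), |d k| ^ q * a k ^ β q = 1) :
    StrictAnti β ∧ ConvexOn ℝ Set.univ β :=
  stmt_3_general r a d ha hd β hβ
end

section
/- Let f : [a,b] → ℝ and let x_0 < x_1 < ··· < x_N be N+1 points in [a,b]. Set δ := min{x_k − x_{k−1} : k = 1,...,N}. Then for any x ∈ [a,b] there exists an index k ∈ {0,1,...,N} such that |f(x) − f(x_k)| ≥ N! (δ/2)^N |f[x_0, x_1, ..., x_N]|, where f[x_0,...,x_N] denotes the divided difference of f of order N at the points x_0,...,x_N. -/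
open Real Finset

/-- The divided difference `f[x_i, x_{i+1}, ..., x_{i+k}]`, defined inductively:
`divDiff f x i 0 = f (x i)` and
`divDiff f x i (k+1) = (f[x_{i+1},...,x_{i+k+1}] - f[x_i,...,x_{i+k}]) / (x_{i+k+1} - x_i)`. -/
noncomputable def divDiff (f : ℝ → ℝ) (x : ℕ → ℝ) : ℕ → ℕ → ℝ
  | i, 0 => f (x i)
  | i, k + 1 => (divDiff f x (i + 1) k - divDiff f x i k) / (x (i + k + 1) - x i)

lemma divDiff_sub_const (f : ℝ → ℝ) (x : ℕ → ℝ) (c : ℝ) :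
    ∀ k i, divDiff (fun y => f y - c) x i (k + 1) = divDiff f x i (k + 1) := by
  intro k
  induction k with
  | zero => intro i; simp only [divDiff]; ring_nf
  | succ k ih =>
      intro i
      show (divDiff (fun y => f y - c) x (i+1) (k+1) - divDiff (fun y => f y - c) x i (k+1)) / _
        = _
      rw [ih, ih]
      rfl

lemma divDiff_bound (g : ℝ → ℝ) (x : ℕ → ℝ) (N : ℕ) (δ M : ℝ) (hδpos : 0 < δ)
    (hgap : ∀ i m, i + m ≤ N → (m : ℝ) * δ ≤ x (i + m) - x i)
    (hM : ∀ j ≤ N, |g (x j)| ≤ M) :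
    ∀ k i, i + k ≤ N → |divDiff g x i k| ≤ 2 ^ k * M / (k.factorial * δ ^ k) := by
  intro k
  induction k with
  | zero =>
      intro i hi
      simpa [divDiff] using hM i (by omega)
  | succ k ih =>
      intro i hi
      have hden : ((k : ℝ) + 1) * δ ≤ x (i + k + 1) - x i := by
        have h := hgap i (k + 1) (by omega)
        rw [show i + (k + 1) = i + k + 1 from rfl] at h
        push_cast at h
        linarith
      have hdenpos : (0 : ℝ) < x (i + k + 1) - x i :=
        lt_of_lt_of_le (by positivity) hden
      have h1 := ih (i + 1) (by omega)
      have h2 := ih i (by omega)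
      have hMnn : 0 ≤ M := le_trans (abs_nonneg _) (hM 0 (by omega))
      show |(divDiff g x (i+1) k - divDiff g x i k) / (x (i + k + 1) - x i)| ≤ _
      rw [abs_div, abs_of_pos hdenpos]
      have hnum : |divDiff g x (i+1) k - divDiff g x i k| ≤ 2 * (2 ^ k * M / (k.factorial * δ ^ k)) := by
        calc |divDiff g x (i+1) k - divDiff g x i k|
            ≤ |divDiff g x (i+1) k| + |divDiff g x i k| := abs_sub _ _
          _ ≤ _ := by linarith
      calc |divDiff g x (i+1) k - divDiff g x i k| / (x (i + k + 1) - x i)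
          ≤ (2 * (2 ^ k * M / (k.factorial * δ ^ k))) / (((k : ℝ) + 1) * δ) := by
            apply div_le_div₀ (by positivity) hnum (by positivity) hden
        _ = 2 ^ (k+1) * M / ((k+1).factorial * δ ^ (k+1)) := by
            rw [Nat.factorial_succ]
            push_cast
            field_simp
            ring

theorem stmt_5 (f : ℝ → ℝ) (a b : ℝ) (N : ℕ) (hN : 1 ≤ N) (x : ℕ → ℝ)
    (hx : ∀ k ≤ N, x k ∈ Set.Icc a b)
    (hmono : ∀ k < N, x k < x (k + 1))
    (δ : ℝ)
    (hδ : δ = (Finset.Icc 1 N).inf' (Finset.nonempty_Icc.mpr hN)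
      (fun k => x k - x (k - 1)))
    (t : ℝ) (ht : t ∈ Set.Icc a b) :
    ∃ k ≤ N, (N.factorial : ℝ) * (δ / 2) ^ N * |divDiff f x 0 N| ≤ |f t - f (x k)| := by
  -- δ is positive
  have hδpos : 0 < δ := by
    rw [hδ, Finset.lt_inf'_iff]
    intro j hj
    simp only [Finset.mem_Icc] at hj
    have h := hmono (j - 1) (by omega)
    have : j - 1 + 1 = j := by omega
    rw [this] at h
    linarith
  have hδle : ∀ j, 1 ≤ j → j ≤ N → δ ≤ x j - x (j - 1) := by
    intro j h1 h2
    rw [hδ]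
    exact Finset.inf'_le _ (Finset.mem_Icc.mpr ⟨h1, h2⟩)
  have hgap : ∀ i m, i + m ≤ N → (m : ℝ) * δ ≤ x (i + m) - x i := by
    intro i m
    induction m with
    | zero => intro _; simp
    | succ m ih =>
        intro h
        have h1 := ih (by omega)
        have h2 := hδle (i + m + 1) (by omega) (by omega)
        have : i + m + 1 - 1 = i + m := by omega
        rw [this] at h2
        push_cast
        have : i + (m + 1) = i + m + 1 := by omega
        rw [this]
        linarith
  -- pick maximizing node
  obtain ⟨k, hk, hmax⟩ := Finset.exists_max_image (Finset.range (N + 1))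
    (fun j => |f t - f (x j)|) ⟨0, Finset.mem_range.mpr (by omega)⟩
  simp only [Finset.mem_range] at hk
  refine ⟨k, by omega, ?_⟩
  set M := |f t - f (x k)| with hMdef
  have hM : ∀ j ≤ N, |(fun y => f y - f t) (x j)| ≤ M := by
    intro j hj
    have := hmax j (Finset.mem_range.mpr (by omega))
    simpa [abs_sub_comm] using this
  have hb := divDiff_bound (fun y => f y - f t) x N δ M hδpos hgap hM N 0 (by omega)
  obtain ⟨N', rfl⟩ : ∃ N', N = N' + 1 := ⟨N - 1, by omega⟩
  rw [divDiff_sub_const] at hb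
  have hMnn : 0 ≤ M := abs_nonneg _
  have hfac : (0:ℝ) < ((N' + 1).factorial : ℝ) := by positivity
  calc ((N' + 1).factorial : ℝ) * (δ / 2) ^ (N' + 1) * |divDiff f x 0 (N' + 1)|
      ≤ ((N' + 1).factorial : ℝ) * (δ / 2) ^ (N' + 1) *
        (2 ^ (N' + 1) * M / ((N' + 1).factorial * δ ^ (N' + 1))) := by
        apply mul_le_mul_of_nonneg_left hb (by positivity)
    _ = M := by
        rw [div_pow]
        field_simp
end

section
/- In the setting of the previous statement (self-similar coding of (0,1) by maps with ratios a_1,...,a_r), for any s > 0 there exists ε > 0 such that the set {ξ ∈ (0,1) : limsup_{n→∞} L_n(ξ)/n > 1 − ε} has Hausdorff dimension less than s. -/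
open Real Finset Filter MeasureTheory
open scoped ENNReal NNReal

section Aux
variable {r : ℕ} (a : Fin r → ℝ) (b : Fin r → ℝ) (S : Fin r → ℝ → ℝ)

/-- foldr is affine in the starting point. -/
lemma aux_fold_affine (hS : ∀ k x, S k x = a k * x + b k) :
    ∀ (l : List (Fin r)) (x : ℝ),
      l.foldr (fun k y => S k y) x = l.foldr (fun k y => S k y) 0 + (l.map a).prod * x := by
  intro l
  induction l with
  | nil => intro x; simp
  | cons k l ih =>
    intro x
    simp only [List.foldr_cons, List.map_cons, List.prod_cons]
    rw [hS, hS, ih x]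
    ring

lemma aux_fold_mem01 (ha : ∀ k, 0 < a k ∧ a k < 1)
    (hb : ∀ k, b k = ∑ j ∈ univ.filter (fun j => j < k), a j)
    (hsum : ∑ k, a k = 1)
    (hS : ∀ k x, S k x = a k * x + b k) :
    ∀ (l : List (Fin r)) (x : ℝ), x ∈ Set.Icc (0:ℝ) 1 →
      l.foldr (fun k y => S k y) x ∈ Set.Icc (0:ℝ) 1 := by
  have hb0 : ∀ k, 0 ≤ b k := by
    intro k; rw [hb k]; exact Finset.sum_nonneg (fun j _ => (ha j).1.le)
  have hab : ∀ k, a k + b k ≤ 1 := by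
    intro k
    rw [hb k, ← hsum]
    have hknot : k ∉ univ.filter (fun j => j < k) := by simp
    rw [← Finset.sum_insert hknot]
    exact Finset.sum_le_sum_of_subset_of_nonneg (Finset.subset_univ _)
      (fun j _ _ => (ha j).1.le)
  intro l
  induction l with
  | nil => intro x hx; exact hx
  | cons k l ih =>
    intro x hx
    obtain ⟨h0, h1⟩ := ih x hx
    simp only [List.foldr_cons]
    rw [hS]
    constructor
    · have := (ha k).1
      have := hb0 k
      nlinarith
    · nlinarith [(ha k).1, hab k]

end Aux

noncomputable def cylSet {r : ℕ} (a : Fin r → ℝ) (S : Fin r → ℝ → ℝ) (n : ℕ)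
    (w : Fin n → Fin r) : Set ℝ :=
  Set.Icc ((List.ofFn w).foldr (fun k y => S k y) 0)
    ((List.ofFn w).foldr (fun k y => S k y) 0 + ∏ i, a (w i))

open scoped Classical in
noncomputable def tSet {r : ℕ} (a : Fin r → ℝ) (S : Fin r → ℝ → ℝ) (rtop : Fin r) (K : ℕ)
    (n : ℕ) (w : Fin n → Fin r) : Set ℝ :=
  if ∀ i : Fin n, K ≤ (i : ℕ) → w i = rtop then cylSet a S n w else ∅

section Aux2
variable {r : ℕ} {a : Fin r → ℝ} {b : Fin r → ℝ} {S : Fin r → ℝ → ℝ}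

lemma aux_mem_cyl (ha : ∀ k, 0 < a k ∧ a k < 1)
    (hb : ∀ k, b k = ∑ j ∈ univ.filter (fun j => j < k), a j)
    (hsum : ∑ k, a k = 1)
    (hS : ∀ k x, S k x = a k * x + b k)
    (κ : ℕ → Fin r) (ξ : ℝ)
    (htend : Tendsto (fun n => ((List.range n).map (fun i => κ (i + 1))).foldr
        (fun k y => S k y) 0) atTop (nhds ξ)) (n : ℕ) :
    ξ ∈ cylSet a S n (fun i => κ ((i : ℕ) + 1)) := by
  set w : Fin n → Fin r := fun i => κ ((i : ℕ) + 1) with hw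
  set F0 : ℝ := (List.ofFn w).foldr (fun k y => S k y) 0 with hF0
  set P : ℝ := ∏ i, a (w i) with hP
  have hrange : ∀ m : ℕ, (List.range (n + m)).map (fun i => κ (i + 1)) =
      List.ofFn w ++ (List.range m).map (fun i => κ (n + i + 1)) := by
    intro m
    rw [List.range_add, List.map_append, List.map_map]
    congr 1
    rw [← List.map_coe_finRange_eq_range, List.map_map, List.ofFn_eq_map]
    rfl
  have hPnonneg : 0 ≤ P := Finset.prod_nonneg (fun i _ => (ha (w i)).1.le)
  have hmem : ∀ m : ℕ, ((List.range (n + m)).map (fun i => κ (i + 1))).foldr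
      (fun k y => S k y) 0 ∈ Set.Icc F0 (F0 + P) := by
    intro m
    rw [hrange m, List.foldr_append]
    set y : ℝ := ((List.range m).map (fun i => κ (n + i + 1))).foldr (fun k y => S k y) 0 with hy
    have hy01 : y ∈ Set.Icc (0:ℝ) 1 :=
      aux_fold_mem01 a b S ha hb hsum hS _ 0 (by norm_num)
    have haff := aux_fold_affine a b S hS (List.ofFn w) y
    have hprod : ((List.ofFn w).map a).prod = P := by
      rw [List.map_ofFn, List.prod_ofFn]; rfl
    rw [haff, hprod]
    constructor
    · nlinarith [hy01.1, hy01.2]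
    · nlinarith [hy01.1, hy01.2]
  have htend' : Tendsto (fun m => ((List.range (n + m)).map (fun i => κ (i + 1))).foldr
      (fun k y => S k y) 0) atTop (nhds ξ) := by
    have h1 : Tendsto (fun m : ℕ => n + m) atTop atTop :=
      (tendsto_add_atTop_nat n).congr (fun m => Nat.add_comm m n)
    exact htend.comp h1
  exact isClosed_Icc.mem_of_tendsto htend' (Eventually.of_forall hmem)

lemma aux_prod_le (ha : ∀ k, 0 < a k ∧ a k < 1) (rtop : Fin r) (K n : ℕ)
    (w : Fin n → Fin r) (hcond : ∀ i : Fin n, K ≤ (i : ℕ) → w i = rtop) :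
    ∏ i, a (w i) ≤ a rtop ^ (n - K) := by
  classical
  have hsplit := Finset.prod_filter_mul_prod_filter_not
    (Finset.univ : Finset (Fin n)) (fun i : Fin n => K ≤ (i : ℕ)) (fun i => a (w i))
  have h1 : ∏ i ∈ Finset.univ.filter (fun i : Fin n => K ≤ (i : ℕ)), a (w i)
      = a rtop ^ (Finset.univ.filter (fun i : Fin n => K ≤ (i : ℕ))).card := by
    rw [Finset.prod_congr rfl (fun i hi => by
      rw [hcond i (Finset.mem_filter.1 hi).2]), Finset.prod_const]
  have h2 : ∏ i ∈ Finset.univ.filter (fun i : Fin n => ¬ K ≤ (i : ℕ)), a (w i) ≤ 1 :=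
    Finset.prod_le_one (fun i _ => (ha (w i)).1.le) (fun i _ => (ha (w i)).2.le)
  have h2' : (0:ℝ) ≤ ∏ i ∈ Finset.univ.filter (fun i : Fin n => ¬ K ≤ (i : ℕ)), a (w i) :=
    Finset.prod_nonneg (fun i _ => (ha (w i)).1.le)
  have hcard : n - K ≤ (Finset.univ.filter (fun i : Fin n => K ≤ (i : ℕ))).card := by
    have hneg : (Finset.univ.filter (fun i : Fin n => ¬ K ≤ (i : ℕ))).card ≤ K := by
      have h := Finset.card_le_card_of_injOn (fun i => (i : ℕ))
        (s := Finset.univ.filter (fun i : Fin n => ¬ K ≤ (i : ℕ))) (t := Finset.range K)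
        (by intro i hi; simp only [Finset.mem_filter, not_le] at hi
            exact Finset.mem_range.2 (by simpa using hi))
        (fun x _ y _ h => Fin.val_injective h)
      simpa using h
    have := Finset.card_filter_add_card_filter_not
      (s := (Finset.univ : Finset (Fin n))) (p := fun i : Fin n => K ≤ (i : ℕ))
    simp only [Finset.card_univ, Fintype.card_fin] at this
    omega
  have hpow : a rtop ^ (Finset.univ.filter (fun i : Fin n => K ≤ (i : ℕ))).card
      ≤ a rtop ^ (n - K) :=
    pow_le_pow_of_le_one (ha rtop).1.le (ha rtop).2.le hcard
  have hApow : (0:ℝ) ≤ a rtop ^ (Finset.univ.filter (fun i : Fin n => K ≤ (i : ℕ))).card :=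
    pow_nonneg (ha rtop).1.le _
  calc ∏ i, a (w i)
      = (∏ i ∈ Finset.univ.filter (fun i : Fin n => K ≤ (i : ℕ)), a (w i)) *
        ∏ i ∈ Finset.univ.filter (fun i : Fin n => ¬ K ≤ (i : ℕ)), a (w i) := hsplit.symm
    _ ≤ a rtop ^ (n - K) := by rw [h1]; nlinarith

lemma aux_count (rtop : Fin r) (K n : ℕ) :
    ((Finset.univ : Finset (Fin n → Fin r)).filter
      (fun w => ∀ i : Fin n, K ≤ (i : ℕ) → w i = rtop)).card ≤ r ^ K := by
  classical
  have h := Finset.card_le_card_of_injOn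
    (fun w : Fin n → Fin r => (fun j : Fin K => if h : (j : ℕ) < n then w ⟨j, h⟩ else rtop))
    (s := (Finset.univ : Finset (Fin n → Fin r)).filter
      (fun w => ∀ i : Fin n, K ≤ (i : ℕ) → w i = rtop))
    (t := (Finset.univ : Finset (Fin K → Fin r)))
    (fun w _ => Finset.mem_univ _)
    (by
      intro w1 h1 w2 h2 heq
      simp only [Finset.coe_filter, Set.mem_setOf_eq] at h1 h2
      funext i
      by_cases hi : (i : ℕ) < K
      · have h3 := congrFun heq ⟨(i : ℕ), hi⟩
        simp only [] at h3
        rw [dif_pos (show ((⟨(i : ℕ), hi⟩ : Fin K) : ℕ) < n from i.isLt),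
          dif_pos (show ((⟨(i : ℕ), hi⟩ : Fin K) : ℕ) < n from i.isLt)] at h3
        exact h3
      · rw [h1.2 i (le_of_not_gt hi), h2.2 i (le_of_not_gt hi)])
  simpa using h

end Aux2
set_option maxHeartbeats 2000000 in
theorem stmt_9 (r : ℕ) (hr : 2 ≤ r) (a : Fin r → ℝ)
    (ha : ∀ k, 0 < a k ∧ a k < 1) (hsum : ∑ k, a k = 1)
    (b : Fin r → ℝ) (hb : ∀ k, b k = ∑ j ∈ univ.filter (fun j => j < k), a j)
    (S : Fin r → ℝ → ℝ) (hS : ∀ k x, S k x = a k * x + b k)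
    (rtop : Fin r) (hrtop : (rtop : ℕ) = r - 1)
    (L : (ℕ → Fin r) → ℕ → ℕ)
    (hL : ∀ κ n, L κ n = sSup {j | j ≤ n ∧ ∀ i, n - j < i → i ≤ n → κ i = rtop})
    (s : ℝ) (hs : 0 < s) :
    ∃ ε > (0 : ℝ), dimH {ξ : ℝ | ξ ∈ Set.Ioo 0 1 ∧ ∃ κ : ℕ → Fin r,
        Tendsto (fun n => ((List.range n).map (fun i => κ (i + 1))).foldr
            (fun k y => S k y) 0) atTop (nhds ξ) ∧
        1 - ε < Filter.limsup (fun n => (L κ n : ℝ) / n) atTop} < ENNReal.ofReal s := by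
  classical
  obtain ⟨hA0, hA1⟩ := ha rtop
  set A : ℝ := a rtop with hA
  set d : ℝ := s / 2 with hd
  have hd0 : 0 < d := by positivity
  have hlogA : Real.log A < 0 := Real.log_neg hA0 hA1
  have hrR : (1:ℝ) < (r:ℝ) := by exact_mod_cast lt_of_lt_of_le one_lt_two hr
  set lr : ℝ := Real.log r with hlr
  have hlr0 : 0 < lr := by rw [hlr]; exact Real.log_pos hrR
  set c : ℝ := -(d * Real.log A) with hc
  have hc0 : 0 < c := by rw [hc]; nlinarith
  have hlrc : 0 < lr + c := by linarith
  set ε : ℝ := c / (2 * (lr + c)) with hε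
  have hε0 : 0 < ε := by positivity
  have hεkey : ε * (lr + c) = c / 2 := by
    rw [hε]; field_simp
  have hε1 : ε < 1 := by
    rw [hε, div_lt_one (by linarith)]; linarith
  refine ⟨ε, hε0, ?_⟩
  set E : Set ℝ := {ξ : ℝ | ξ ∈ Set.Ioo 0 1 ∧ ∃ κ : ℕ → Fin r,
      Tendsto (fun n => ((List.range n).map (fun i => κ (i + 1))).foldr
          (fun k y => S k y) 0) atTop (nhds ξ) ∧
      1 - ε < Filter.limsup (fun n => (L κ n : ℝ) / n) atTop} with hE
  set kk : ℕ → ℕ := fun n => ⌈ε * n⌉₊ with hkk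
  set C : ℝ := Real.exp (lr + c) with hC
  set q : ℝ := Real.exp (-(c / 2)) with hq
  have hq0 : 0 < q := Real.exp_pos _
  have hq1 : q < 1 := by rw [hq]; exact Real.exp_lt_one_iff.2 (by linarith)
  set qq : ℝ≥0∞ := ENNReal.ofReal q with hqq
  have hqq1 : qq < 1 := by rw [hqq]; exact ENNReal.ofReal_lt_one.2 hq1
  have hkk_le : ∀ n : ℕ, (kk n : ℝ) ≤ ε * n + 1 := fun n =>
    le_of_lt (Nat.ceil_lt_add_one (by positivity))
  have hkk_ge : ∀ n : ℕ, ε * n ≤ (kk n : ℝ) := fun n => Nat.le_ceil _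
  have hkk_len : ∀ n : ℕ, kk n ≤ n := by
    intro n
    apply Nat.ceil_le.2
    nlinarith [Nat.cast_nonneg (α := ℝ) n]
  -- key real inequality
  have hdlA : Real.log A * d = -c := by rw [hc]; ring
  have hkey : ∀ n : ℕ, (r : ℝ) ^ kk n * A ^ (((n : ℝ) - kk n) * d) ≤ C * q ^ n := by
    intro n
    have e1 : (r : ℝ) ^ kk n = Real.exp ((kk n : ℝ) * lr) := by
      rw [Real.exp_nat_mul, hlr, Real.exp_log (by linarith)]
    have e2 : A ^ (((n : ℝ) - kk n) * d) = Real.exp (Real.log A * (((n : ℝ) - kk n) * d)) :=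
      Real.rpow_def_of_pos hA0 _
    have e3 : C * q ^ n = Real.exp ((lr + c) + (n : ℝ) * (-(c / 2))) := by
      rw [hC, hq, ← Real.exp_nat_mul, ← Real.exp_add]
    rw [e1, e2, e3, ← Real.exp_add, Real.exp_le_exp]
    have e4 : Real.log A * (((n : ℝ) - kk n) * d) = -c * ((n : ℝ) - kk n) := by
      rw [show Real.log A * (((n : ℝ) - kk n) * d)
          = (Real.log A * d) * ((n : ℝ) - kk n) from by ring, hdlA]
    rw [e4]
    have hKb : (kk n : ℝ) - 1 ≤ ε * n := by linarith [hkk_le n]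
    nlinarith [mul_le_mul_of_nonneg_right hKb hlrc.le, hεkey]
  -- diameter bound
  have hdiam : ∀ (n : ℕ) (w : Fin n → Fin r),
      EMetric.diam (tSet a S rtop (kk n) n w) ≤ ENNReal.ofReal (A ^ ((n : ℝ) - kk n)) := by
    intro n w
    by_cases hcond : ∀ i : Fin n, kk n ≤ (i : ℕ) → w i = rtop
    · have h1 : tSet a S rtop (kk n) n w = cylSet a S n w := by
        rw [tSet, if_pos hcond]
      rw [h1, cylSet, EMetric.diam, Real.ediam_Icc, add_sub_cancel_left]
      apply ENNReal.ofReal_le_ofReal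
      calc ∏ i, a (w i) ≤ A ^ (n - kk n) := aux_prod_le ha rtop (kk n) n w hcond
        _ = A ^ (((n - kk n : ℕ) : ℝ)) := (Real.rpow_natCast A _).symm
        _ = A ^ ((n : ℝ) - kk n) := by rw [Nat.cast_sub (hkk_len n)]
    · have h1 : tSet a S rtop (kk n) n w = ∅ := by rw [tSet, if_neg hcond]
      rw [h1, EMetric.diam, EMetric.diam_empty]
      exact zero_le
  -- level sum bound
  have hlevel : ∀ n : ℕ,
      (∑' w : Fin n → Fin r, EMetric.diam (tSet a S rtop (kk n) n w) ^ d)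
        ≤ ENNReal.ofReal C * qq ^ n := by
    intro n
    rw [tsum_fintype]
    set G : ℝ≥0∞ := ENNReal.ofReal (A ^ (((n : ℝ) - kk n) * d)) with hG
    have hterm : ∀ w : Fin n → Fin r,
        EMetric.diam (tSet a S rtop (kk n) n w) ^ d ≤
          (if ∀ i : Fin n, kk n ≤ (i : ℕ) → w i = rtop then G else 0) := by
      intro w
      by_cases hcond : ∀ i : Fin n, kk n ≤ (i : ℕ) → w i = rtop
      · rw [if_pos hcond, hG]
        calc EMetric.diam (tSet a S rtop (kk n) n w) ^ d
            ≤ (ENNReal.ofReal (A ^ ((n : ℝ) - kk n))) ^ d :=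
              ENNReal.rpow_le_rpow (hdiam n w) hd0.le
          _ = ENNReal.ofReal ((A ^ ((n : ℝ) - kk n)) ^ d) :=
              ENNReal.ofReal_rpow_of_nonneg (Real.rpow_nonneg hA0.le _) hd0.le
          _ = ENNReal.ofReal (A ^ (((n : ℝ) - kk n) * d)) := by
              rw [← Real.rpow_mul hA0.le]
      · rw [if_neg hcond]
        have h1 : tSet a S rtop (kk n) n w = ∅ := by rw [tSet, if_neg hcond]
        rw [h1, EMetric.diam, EMetric.diam_empty, ENNReal.zero_rpow_of_pos hd0]
    calc ∑ w : Fin n → Fin r, EMetric.diam (tSet a S rtop (kk n) n w) ^ d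
        ≤ ∑ w : Fin n → Fin r,
          (if ∀ i : Fin n, kk n ≤ (i : ℕ) → w i = rtop then G else 0) :=
          Finset.sum_le_sum (fun w _ => hterm w)
      _ = ((Finset.univ.filter
            (fun w : Fin n → Fin r => ∀ i : Fin n, kk n ≤ (i : ℕ) → w i = rtop)).card : ℝ≥0∞)
            * G := by
          rw [Finset.sum_ite, Finset.sum_const, Finset.sum_const_zero, add_zero, nsmul_eq_mul]
      _ ≤ ((r ^ kk n : ℕ) : ℝ≥0∞) * G := by
          apply mul_le_mul_left
          exact_mod_cast Nat.cast_le.2 (aux_count rtop (kk n) n)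
      _ ≤ ENNReal.ofReal C * qq ^ n := by
          rw [hG, ← ENNReal.ofReal_natCast, ← ENNReal.ofReal_mul (by positivity)]
          calc ENNReal.ofReal (((r ^ kk n : ℕ) : ℝ) * A ^ (((n : ℝ) - kk n) * d))
              ≤ ENNReal.ofReal (C * q ^ n) := by
                apply ENNReal.ofReal_le_ofReal
                push_cast
                exact hkey n
            _ = ENNReal.ofReal C * qq ^ n := by
                rw [ENNReal.ofReal_mul (Real.exp_pos _).le, hqq, ENNReal.ofReal_pow hq0.le]
  -- the covers
  set t : ∀ N : ℕ, (Σ m : ℕ, (Fin (N + m) → Fin r)) → Set ℝ :=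
    fun N p => tSet a S rtop (kk (N + p.1)) (N + p.1) p.2 with ht_def
  set rr : ℕ → ℝ≥0∞ := fun N => ENNReal.ofReal (A ^ ((1 - ε) * N - 1)) with hrr
  have hmesh : ∀ N (p : Σ m : ℕ, (Fin (N + m) → Fin r)),
      EMetric.diam (t N p) ≤ rr N := by
    intro N p
    refine le_trans (hdiam (N + p.1) p.2) (ENNReal.ofReal_le_ofReal ?_)
    apply Real.rpow_le_rpow_of_exponent_ge hA0 hA1.le
    have h1 := hkk_le (N + p.1)
    have h2 : (N : ℝ) ≤ ((N + p.1 : ℕ) : ℝ) := by exact_mod_cast Nat.le_add_right N p.1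
    push_cast at h1 h2 ⊢
    nlinarith
  have hmesh_tend : Tendsto rr atTop (nhds 0) := by
    have hA_tend : Tendsto (fun x : ℝ => A ^ x) atTop (nhds 0) :=
      tendsto_rpow_atTop_of_base_lt_one A (by linarith) hA1
    have hφ : Tendsto (fun N : ℕ => (1 - ε) * N - 1) atTop atTop := by
      simp only [sub_eq_add_neg]
      apply tendsto_atTop_add_const_right
      exact Tendsto.const_mul_atTop (by linarith) tendsto_natCast_atTop_atTop
    have h := (ENNReal.continuous_ofReal.tendsto 0).comp (hA_tend.comp hφ)
    simpa [hrr, Function.comp_def] using h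
  -- covering property
  have hst : ∀ N : ℕ, E ⊆ ⋃ p : Σ m : ℕ, (Fin (N + m) → Fin r), t N p := by
    intro N ξ hξ
    obtain ⟨hξIoo, κ, htend, hlim⟩ := hξ
    have hcob : IsCoboundedUnder (· ≤ ·) atTop (fun n => (L κ n : ℝ) / n) :=
      isCoboundedUnder_le_of_le atTop (x := 0) (fun n => by positivity)
    have hfreq := frequently_lt_of_lt_limsup hcob hlim
    obtain ⟨n, hnN, hn⟩ := (frequently_atTop.1 hfreq) (max N 1)
    have hN_le : N ≤ n := le_trans (le_max_left _ _) hnN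
    have hn1 : 1 ≤ n := le_trans (le_max_right _ _) hnN
    have hnR : (0 : ℝ) < n := by exact_mod_cast Nat.lt_of_lt_of_le Nat.zero_lt_one hn1
    have hne : ({j | j ≤ n ∧ ∀ i, n - j < i → i ≤ n → κ i = rtop} : Set ℕ).Nonempty :=
      ⟨0, Nat.zero_le n, fun i h1 h2 => absurd h2 (by omega)⟩
    have hbdd : BddAbove ({j | j ≤ n ∧ ∀ i, n - j < i → i ≤ n → κ i = rtop} : Set ℕ) :=
      ⟨n, fun j hj => hj.1⟩
    have hmem := Nat.sSup_mem hne hbdd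
    rw [← hL κ n] at hmem
    obtain ⟨hLle, hrun⟩ := hmem
    have hLgt : (1 - ε) * n < (L κ n : ℝ) := by
      rw [lt_div_iff₀ hnR] at hn
      linarith
    have hsub : (n - L κ n : ℕ) < kk n := by
      have h1 : ((n - L κ n : ℕ) : ℝ) = (n : ℝ) - L κ n := by
        rw [Nat.cast_sub hLle]
      have h2 : (n : ℝ) - L κ n < ε * n := by nlinarith
      have h3 : ((n - L κ n : ℕ) : ℝ) < (kk n : ℝ) := by
        rw [h1]; exact lt_of_lt_of_le h2 (hkk_ge n)
      exact_mod_cast h3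
    have hcond : ∀ i : Fin n, kk n ≤ (i : ℕ) → κ ((i : ℕ) + 1) = rtop := by
      intro i hi
      exact hrun ((i : ℕ) + 1) (by omega) (by omega)
    have hmemcyl := aux_mem_cyl ha hb hsum hS κ ξ htend n
    refine Set.mem_iUnion.2 ⟨⟨n - N, fun j => κ ((j : ℕ) + 1)⟩, ?_⟩
    show ξ ∈ tSet a S rtop (kk (N + (n - N))) (N + (n - N)) (fun j => κ ((j : ℕ) + 1))
    rw [Nat.add_sub_cancel' hN_le, tSet, if_pos hcond]
    exact hmemcyl
  -- Hausdorff measure estimate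
  have hμ : μH[d] E ≤ Filter.liminf
      (fun N => ∑' p : Σ m : ℕ, (Fin (N + m) → Fin r), EMetric.diam (t N p) ^ d) atTop :=
    MeasureTheory.Measure.hausdorffMeasure_le_liminf_tsum d E rr hmesh_tend t
      (Eventually.of_forall hmesh) (Eventually.of_forall hst)
  have hTB : ∀ N : ℕ,
      (∑' p : Σ m : ℕ, (Fin (N + m) → Fin r), EMetric.diam (t N p) ^ d)
        ≤ (ENNReal.ofReal C * (1 - qq)⁻¹) * qq ^ N := by
    intro N
    calc (∑' p : Σ m : ℕ, (Fin (N + m) → Fin r), EMetric.diam (t N p) ^ d)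
        = ∑' m : ℕ, ∑' w : Fin (N + m) → Fin r,
            EMetric.diam (tSet a S rtop (kk (N + m)) (N + m) w) ^ d :=
          ENNReal.tsum_sigma' _
      _ ≤ ∑' m : ℕ, ENNReal.ofReal C * qq ^ (N + m) :=
          ENNReal.tsum_le_tsum (fun m => hlevel (N + m))
      _ = ∑' m : ℕ, (ENNReal.ofReal C * qq ^ N) * qq ^ m := by
          congr 1
          funext m
          rw [pow_add]
          ring
      _ = (ENNReal.ofReal C * qq ^ N) * (1 - qq)⁻¹ := by
          rw [ENNReal.tsum_mul_left, ENNReal.tsum_geometric]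
      _ = (ENNReal.ofReal C * (1 - qq)⁻¹) * qq ^ N := by ring
  have hB_tend : Tendsto (fun N : ℕ => (ENNReal.ofReal C * (1 - qq)⁻¹) * qq ^ N)
      atTop (nhds 0) := by
    have h0 := ENNReal.tendsto_pow_atTop_nhds_zero_of_lt_one hqq1
    have hfin : ENNReal.ofReal C * (1 - qq)⁻¹ ≠ ⊤ := by
      apply ENNReal.mul_ne_top ENNReal.ofReal_ne_top
      rw [Ne, ENNReal.inv_eq_top, tsub_eq_zero_iff_le]
      exact hqq1.not_ge
    have := ENNReal.Tendsto.const_mul (a := ENNReal.ofReal C * (1 - qq)⁻¹) h0 (Or.inr hfin)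
    simpa using this
  have hμ0 : μH[d] E = 0 := by
    have h1 : Filter.liminf
        (fun N => ∑' p : Σ m : ℕ, (Fin (N + m) → Fin r), EMetric.diam (t N p) ^ d) atTop
        ≤ Filter.liminf (fun N : ℕ => (ENNReal.ofReal C * (1 - qq)⁻¹) * qq ^ N) atTop :=
      liminf_le_liminf (Eventually.of_forall hTB)
    rw [hB_tend.liminf_eq] at h1
    exact le_antisymm (hμ.trans h1) zero_le
  have hdimH : dimH E ≤ ENNReal.ofReal d := by
    have hcoe : ((d.toNNReal : ℝ≥0) : ℝ) = d := Real.coe_toNNReal d hd0.le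
    have hne : μH[((d.toNNReal : ℝ≥0) : ℝ)] E ≠ ⊤ := by
      rw [hcoe, hμ0]
      exact ENNReal.zero_ne_top
    exact dimH_le_of_hausdorffMeasure_ne_top hne
  refine lt_of_le_of_lt hdimH ?_
  rw [ENNReal.ofReal_lt_ofReal_iff hs]
  rw [hd]
  linarith
end

section
/- Let 0 < a_k < 1, |d_k| < 1 for k ∈ I_+ (a finite set of size ≥ 2), ρ_k := log|d_k|/log a_k, α_min := min ρ_k, α_max := max ρ_k. Let β(q) be defined by ∑_{k∈I_+} |d_k|^q a_k^{β(q)} = 1 and β*(α) := inf_{q∈ℝ} (αq + β(q)). Then for each α ∈ [α_min, α_max], β*(α) equals the maximum of H(p) := (∑ p_k log p_k)/(∑ p_k log a_k) over all probability vectors p = (p_k)_{k∈I_+} satisfying the constraint ∑_{k∈I_+} p_k (log|d_k| − α log a_k) = 0. -/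
open Real Finset Filter Topology

set_option linter.unusedSectionVars false

namespace Stmt10Aux

variable {ι : Type*} [Fintype ι] [Nonempty ι]

/-- Gibbs' inequality. -/
lemma gibbs (p g : ι → ℝ) (hp : ∀ k, 0 ≤ p k) (hg : ∀ k, 0 < g k)
    (hps : ∑ k, p k = 1) (hgs : ∑ k, g k ≤ 1) :
    ∑ k, p k * Real.log (g k) ≤ ∑ k, p k * Real.log (p k) := by
  have key : ∀ k, p k * Real.log (g k) - p k * Real.log (p k) ≤ g k - p k := by
    intro k
    rcases eq_or_lt_of_le (hp k) with h | h
    · simp only [← h, zero_mul, sub_zero, sub_self]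
      exact le_of_lt (hg k)
    · have h1 : Real.log (g k / p k) ≤ g k / p k - 1 :=
        Real.log_le_sub_one_of_pos (div_pos (hg k) h)
      have h2 : Real.log (g k / p k) = Real.log (g k) - Real.log (p k) :=
        Real.log_div (ne_of_gt (hg k)) (ne_of_gt h)
      have h3 := mul_le_mul_of_nonneg_left h1 (le_of_lt h)
      rw [h2, mul_sub, mul_sub, mul_div_cancel₀ _ (ne_of_gt h), mul_one] at h3
      linarith
  have hsum : ∑ k, (p k * Real.log (g k) - p k * Real.log (p k)) ≤ ∑ k, (g k - p k) :=
    Finset.sum_le_sum (fun k _ => key k)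
  rw [Finset.sum_sub_distrib, Finset.sum_sub_distrib, hps] at hsum
  linarith

lemma Dneg (Λ : ι → ℝ) (hΛ : ∀ k, Λ k < 0) (p : ι → ℝ) (hp : ∀ k, 0 ≤ p k)
    (hps : ∑ k, p k = 1) :
    ∑ k, p k * Λ k ≤ univ.sup' univ_nonempty Λ ∧ univ.sup' univ_nonempty Λ < 0 := by
  constructor
  · calc ∑ k, p k * Λ k ≤ ∑ k, p k * univ.sup' univ_nonempty Λ := by
          apply Finset.sum_le_sum
          intro k _
          exact mul_le_mul_of_nonneg_left (Finset.le_sup' Λ (mem_univ k)) (hp k)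
    _ = univ.sup' univ_nonempty Λ := by rw [← Finset.sum_mul, hps, one_mul]
  · exact (Finset.sup'_lt_iff univ_nonempty).2 (fun k _ => hΛ k)


variable (Λ L : ι → ℝ) (β : ℝ → ℝ)

/-- The key upper bound: for an admissible `p` and any `q`,
`H(p) ≤ γ q + β q`. -/
lemma ub (hΛ : ∀ k, Λ k < 0)
    (hβE : ∀ q : ℝ, ∑ k, Real.exp (L k * q + Λ k * β q) = 1)
    (γ : ℝ) (p : ι → ℝ) (hp : ∀ k, 0 ≤ p k) (hps : ∑ k, p k = 1)
    (hc : ∑ k, p k * (L k - γ * Λ k) = 0) (q : ℝ) :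
    (∑ k, p k * Real.log (p k)) / (∑ k, p k * Λ k) ≤ γ * q + β q := by
  obtain ⟨hDle, hsup⟩ := Dneg Λ hΛ p hp hps
  have hD : ∑ k, p k * Λ k < 0 := lt_of_le_of_lt hDle hsup
  have hgibbs := gibbs p (fun k => Real.exp (L k * q + Λ k * β q)) hp
    (fun k => Real.exp_pos _) hps (le_of_eq (hβE q))
  simp only [Real.log_exp] at hgibbs
  have hLsum : ∑ k, p k * L k = γ * ∑ k, p k * Λ k := by
    have : ∑ k, (p k * L k - γ * (p k * Λ k)) = 0 := by
      rw [← hc]; apply Finset.sum_congr rfl; intro k _; ring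
    rw [Finset.sum_sub_distrib, ← Finset.mul_sum] at this
    linarith
  have hexp : ∑ k, p k * (L k * q + Λ k * β q)
      = (γ * q + β q) * ∑ k, p k * Λ k := by
    have : ∑ k, p k * (L k * q + Λ k * β q)
        = q * ∑ k, p k * L k + β q * ∑ k, p k * Λ k := by
      rw [Finset.mul_sum, Finset.mul_sum, ← Finset.sum_add_distrib]
      apply Finset.sum_congr rfl; intro k _; ring
    rw [this, hLsum]; ring
  rw [hexp] at hgibbs
  exact (div_le_iff_of_neg hD).2 hgibbs

/-- If the partition sum at `(q, s)` is `≤ 1`, then `β q ≤ s`. -/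
lemma beta_le (hΛ : ∀ k, Λ k < 0)
    (hβE : ∀ q : ℝ, ∑ k, Real.exp (L k * q + Λ k * β q) = 1)
    (q s : ℝ) (h : ∑ k, Real.exp (L k * q + Λ k * s) ≤ 1) : β q ≤ s := by
  by_contra hlt
  push_neg at hlt
  have : (1:ℝ) < ∑ k, Real.exp (L k * q + Λ k * s) := by
    rw [← hβE q]
    apply Finset.sum_lt_sum_of_nonempty univ_nonempty
    intro k _
    apply Real.exp_lt_exp.2
    have : Λ k * β q < Λ k * s := by
      apply mul_lt_mul_of_neg_left hlt (hΛ k)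
    linarith
  linarith

lemma le_beta (hΛ : ∀ k, Λ k < 0)
    (hβE : ∀ q : ℝ, ∑ k, Real.exp (L k * q + Λ k * β q) = 1)
    (q s : ℝ) (h : 1 ≤ ∑ k, Real.exp (L k * q + Λ k * s)) : s ≤ β q := by
  by_contra hlt
  push_neg at hlt
  have : ∑ k, Real.exp (L k * q + Λ k * s) < 1 := by
    rw [← hβE q]
    apply Finset.sum_lt_sum_of_nonempty univ_nonempty
    intro k _
    apply Real.exp_lt_exp.2
    have : Λ k * s < Λ k * β q := mul_lt_mul_of_neg_left hlt (hΛ k)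
    linarith
  linarith

lemma beta_shift_le (hΛ : ∀ k, Λ k < 0)
    (hβE : ∀ q : ℝ, ∑ k, Real.exp (L k * q + Λ k * β q) = 1)
    (γ : ℝ) (hγ : ∀ k, L k - γ * Λ k ≤ 0) (q δ : ℝ) (hδ : 0 ≤ δ) :
    β (q + δ) ≤ β q - γ * δ := by
  apply beta_le Λ L β hΛ hβE
  calc ∑ k, Real.exp (L k * (q + δ) + Λ k * (β q - γ * δ))
      = ∑ k, Real.exp (L k * q + Λ k * β q) * Real.exp (δ * (L k - γ * Λ k)) := by
        apply Finset.sum_congr rfl; intro k _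
        rw [← Real.exp_add]; ring_nf
    _ ≤ ∑ k, Real.exp (L k * q + Λ k * β q) := by
        apply Finset.sum_le_sum; intro k _
        have h1 : Real.exp (δ * (L k - γ * Λ k)) ≤ 1 :=
          Real.exp_le_one_iff.2 (mul_nonpos_of_nonneg_of_nonpos hδ (hγ k))
        nlinarith [Real.exp_pos (L k * q + Λ k * β q)]
    _ = 1 := hβE q

lemma beta_shift_ge (hΛ : ∀ k, Λ k < 0)
    (hβE : ∀ q : ℝ, ∑ k, Real.exp (L k * q + Λ k * β q) = 1)
    (γ : ℝ) (hγ : ∀ k, 0 ≤ L k - γ * Λ k) (q δ : ℝ) (hδ : 0 ≤ δ) :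
    β q - γ * δ ≤ β (q + δ) := by
  apply le_beta Λ L β hΛ hβE
  calc (1:ℝ) = ∑ k, Real.exp (L k * q + Λ k * β q) := (hβE q).symm
    _ ≤ ∑ k, Real.exp (L k * q + Λ k * β q) * Real.exp (δ * (L k - γ * Λ k)) := by
        apply Finset.sum_le_sum; intro k _
        have h1 : (1:ℝ) ≤ Real.exp (δ * (L k - γ * Λ k)) :=
          Real.one_le_exp_iff.2 (mul_nonneg hδ (hγ k))
        nlinarith [Real.exp_pos (L k * q + Λ k * β q)]
    _ = ∑ k, Real.exp (L k * (q + δ) + Λ k * (β q - γ * δ)) := by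
        apply Finset.sum_congr rfl; intro k _
        rw [← Real.exp_add]; ring_nf

lemma beta_cont (hΛ : ∀ k, Λ k < 0)
    (hβE : ∀ q : ℝ, ∑ k, Real.exp (L k * q + Λ k * β q) = 1)
    (γ₁ γ₂ : ℝ) (h1 : ∀ k, 0 ≤ L k - γ₁ * Λ k) (h2 : ∀ k, L k - γ₂ * Λ k ≤ 0) :
    Continuous β := by
  set C : ℝ := max |γ₁| |γ₂| with hC
  have hC0 : 0 ≤ C := le_trans (abs_nonneg _) (le_max_left _ _)
  have key : ∀ x y : ℝ, x ≤ y → |β y - β x| ≤ C * (y - x) := by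
    intro x y hxy
    have hδ : 0 ≤ y - x := by linarith
    have hle := beta_shift_le Λ L β hΛ hβE γ₂ h2 x (y - x) hδ
    have hge := beta_shift_ge Λ L β hΛ hβE γ₁ h1 x (y - x) hδ
    rw [add_sub_cancel] at hle hge
    rw [abs_le]
    constructor
    · have : γ₁ * (y - x) ≤ C * (y - x) :=
        mul_le_mul_of_nonneg_right (le_trans (le_abs_self _) (le_max_left _ _)) hδ
      linarith
    · have : -(γ₂ * (y - x)) ≤ C * (y - x) := by
        have : -γ₂ ≤ C := le_trans (neg_le_abs _) (le_max_right _ _)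
        nlinarith
      linarith
  have lip : LipschitzWith ⟨C, hC0⟩ β := by
    apply LipschitzWith.of_dist_le_mul
    intro x y
    rw [Real.dist_eq, Real.dist_eq]
    show |β x - β y| ≤ C * |x - y|
    rcases le_total x y with h | h
    · rw [abs_sub_comm (β x), abs_sub_comm x, abs_of_nonneg (sub_nonneg.2 h)]
      exact key x y h
    · rw [abs_of_nonneg (sub_nonneg.2 h)]
      exact key y x h
  exact lip.continuous


lemma alpha_tendsto (hΛ : ∀ k, Λ k < 0)
    (hβE : ∀ q : ℝ, ∑ k, Real.exp (L k * q + Λ k * β q) = 1)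
    (γ : ℝ) (l : Filter ℝ)
    (hten : ∀ k, L k - γ * Λ k ≠ 0 →
      Tendsto (fun q => |L k - γ * Λ k| * Real.exp (q * (L k - γ * Λ k))) l (nhds 0))
    (h0 : ∀ q, 0 ≤ γ * q + β q) :
    Tendsto (fun q => (∑ k, Real.exp (L k * q + Λ k * β q) * L k) /
      (∑ k, Real.exp (L k * q + Λ k * β q) * Λ k)) l (nhds γ) := by
  set c0 : ℝ := -(univ.sup' univ_nonempty Λ) with hc0def
  have hc0 : 0 < c0 := by
    have := (Finset.sup'_lt_iff univ_nonempty).2 (fun k _ => hΛ k)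
    simp only [hc0def]; linarith
  set P : ℝ → ι → ℝ := fun q k => Real.exp (L k * q + Λ k * β q) with hPdef
  have hPpos : ∀ q k, 0 < P q k := fun q k => Real.exp_pos _
  have hPsum : ∀ q, ∑ k, P q k = 1 := hβE
  set N : ℝ → ℝ := fun q => ∑ k, P q k * L k with hNdef
  set D : ℝ → ℝ := fun q => ∑ k, P q k * Λ k with hDdef
  have hD : ∀ q, D q ≤ -c0 ∧ D q < 0 := by
    intro q
    obtain ⟨h1, h2⟩ := Dneg Λ hΛ (P q) (fun k => (hPpos q k).le) (hPsum q)
    exact ⟨by simp only [hc0def]; linarith, lt_of_le_of_lt h1 h2⟩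
  set g : ℝ → ℝ := fun q => (∑ k, |L k - γ * Λ k| * Real.exp (q * (L k - γ * Λ k))) / c0
    with hgdef
  have hbound : ∀ q, dist (N q / D q) γ ≤ g q := by
    intro q
    have hDq := hD q
    have hPle : ∀ k, P q k ≤ Real.exp (q * (L k - γ * Λ k)) := by
      intro k
      apply Real.exp_le_exp.2
      have h1 : Λ k * (γ * q + β q) ≤ 0 :=
        mul_nonpos_of_nonpos_of_nonneg (hΛ k).le (h0 q)
      nlinarith
    have hnum : |N q - γ * D q| ≤ ∑ k, |L k - γ * Λ k| * Real.exp (q * (L k - γ * Λ k)) := by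
      have h1 : N q - γ * D q = ∑ k, P q k * (L k - γ * Λ k) := by
        simp only [hNdef, hDdef, Finset.mul_sum, ← Finset.sum_sub_distrib]
        apply Finset.sum_congr rfl; intro k _; ring
      rw [h1]
      calc |∑ k, P q k * (L k - γ * Λ k)| ≤ ∑ k, |P q k * (L k - γ * Λ k)| :=
            Finset.abs_sum_le_sum_abs _ _
        _ ≤ ∑ k, |L k - γ * Λ k| * Real.exp (q * (L k - γ * Λ k)) := by
            apply Finset.sum_le_sum; intro k _
            rw [abs_mul, abs_of_pos (hPpos q k)]
            rw [mul_comm]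
            exact mul_le_mul_of_nonneg_left (hPle k) (abs_nonneg _)
    have hdisteq : dist (N q / D q) γ = |N q - γ * D q| / |D q| := by
      have heq : N q / D q - γ = (N q - γ * D q) / D q := by
        field_simp [ne_of_lt hDq.2]
      rw [Real.dist_eq, heq, abs_div]
    rw [hdisteq, hgdef]
    apply div_le_div₀ (by positivity) hnum hc0
    rw [abs_of_neg hDq.2]
    linarith [hDq.1]
  have hgten : Tendsto g l (nhds 0) := by
    have hsum : Tendsto (fun q => ∑ k, |L k - γ * Λ k| * Real.exp (q * (L k - γ * Λ k)))
        l (nhds 0) := by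
      have : Tendsto (fun q => ∑ k, |L k - γ * Λ k| * Real.exp (q * (L k - γ * Λ k)))
          l (nhds (∑ k : ι, (0:ℝ))) := by
        apply tendsto_finset_sum
        intro k _
        by_cases hck : L k - γ * Λ k = 0
        · simp only [hck, abs_zero, zero_mul]
          exact tendsto_const_nhds
        · exact hten k hck
      simpa using this
    simpa [hgdef] using hsum.div_const c0
  rw [tendsto_iff_dist_tendsto_zero]
  exact squeeze_zero (fun q => dist_nonneg) hbound hgten

lemma boundary (hΛ : ∀ k, Λ k < 0)
    (hβE : ∀ q : ℝ, ∑ k, Real.exp (L k * q + Λ k * β q) = 1)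
    (γ βstar : ℝ)
    (hK0 : ∃ k0, L k0 - γ * Λ k0 = 0)
    (hlb : ∀ q, βstar ≤ γ * q + β q)
    (hub' : ∀ y : ℝ, (∀ q, y ≤ γ * q + β q) → y ≤ βstar)
    (l : Filter ℝ) [hl : l.NeBot]
    (hten : ∀ k, L k - γ * Λ k ≠ 0 →
      Tendsto (fun q => Real.exp (q * (L k - γ * Λ k) + Λ k * βstar)) l (nhds 0)) :
    ∃ p : ι → ℝ, (∀ k, 0 ≤ p k) ∧ ∑ k, p k = 1 ∧
      ∑ k, p k * (L k - γ * Λ k) = 0 ∧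
      βstar = (∑ k, p k * Real.log (p k)) / (∑ k, p k * Λ k) := by
  classical
  obtain ⟨k0, hk0⟩ := hK0
  set K : Finset ι := univ.filter (fun k => L k - γ * Λ k = 0) with hKdef
  have hKne : K.Nonempty := ⟨k0, Finset.mem_filter.2 ⟨mem_univ _, hk0⟩⟩
  set Ψ : ℝ → ℝ := fun s => ∑ k ∈ K, Real.exp (Λ k * s) with hΨdef
  have hΨc : Continuous Ψ :=
    continuous_finset_sum _ fun k _ => Real.continuous_exp.comp (continuous_const.mul continuous_id)
  have hcardpos : (0:ℝ) < (K.card : ℝ) := by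
    exact_mod_cast Finset.card_pos.2 hKne
  have hΨ0 : Ψ 0 = (K.card : ℝ) := by
    simp [hΨdef, Finset.sum_const, nsmul_eq_mul]
  have h1leΨ0 : (1:ℝ) ≤ Ψ 0 := by
    rw [hΨ0]; exact_mod_cast Finset.card_pos.2 hKne
  set ΛK : ℝ := K.sup' hKne Λ with hΛKdef
  have hΛK : ΛK < 0 := (Finset.sup'_lt_iff hKne).2 (fun k _ => hΛ k)
  set s2 : ℝ := Real.log (K.card : ℝ) / (-ΛK) with hs2def
  have hs2 : 0 ≤ s2 := by
    apply div_nonneg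
    · exact Real.log_nonneg (by exact_mod_cast Finset.card_pos.2 hKne)
    · linarith
  have hΨs2 : Ψ s2 ≤ 1 := by
    have hstep : ∀ k ∈ K, Real.exp (Λ k * s2) ≤ Real.exp (ΛK * s2) := by
      intro k hk
      apply Real.exp_le_exp.2
      exact mul_le_mul_of_nonneg_right (Finset.le_sup' Λ hk) hs2
    calc Ψ s2 ≤ ∑ _k ∈ K, Real.exp (ΛK * s2) := Finset.sum_le_sum hstep
      _ = (K.card : ℝ) * Real.exp (ΛK * s2) := by
          rw [Finset.sum_const, nsmul_eq_mul]
      _ = 1 := by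
          have hne : ΛK ≠ 0 := ne_of_lt hΛK
          have : ΛK * s2 = -Real.log (K.card : ℝ) := by
            rw [hs2def, div_neg, mul_neg, neg_inj, mul_comm, div_mul_cancel₀ _ hne]
          rw [this, Real.exp_neg, Real.exp_log hcardpos]
          field_simp
  have hIVT : ∃ Lα : ℝ, Ψ Lα = 1 := by
    have h1mem : (1:ℝ) ∈ Set.uIcc (Ψ s2) (Ψ 0) :=
      Set.mem_uIcc.2 (Or.inl ⟨hΨs2, h1leΨ0⟩)
    have := intermediate_value_uIcc (hΨc.continuousOn (s := Set.uIcc s2 0)) h1mem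
    obtain ⟨Lα, _, hLα⟩ := this
    exact ⟨Lα, hLα⟩
  obtain ⟨Lα, hΨLα⟩ := hIVT
  set p : ι → ℝ := fun k => if L k - γ * Λ k = 0 then Real.exp (Λ k * Lα) else 0 with hpdef
  have hp0 : ∀ k, 0 ≤ p k := by
    intro k; simp only [hpdef]
    split_ifs
    · exact (Real.exp_pos _).le
    · exact le_refl 0
  have hpsum : ∑ k, p k = 1 := by
    rw [← hΨLα]
    show ∑ k, p k = ∑ k ∈ univ.filter (fun k => L k - γ * Λ k = 0), Real.exp (Λ k * Lα)
    rw [Finset.sum_filter]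
  have hpc : ∑ k, p k * (L k - γ * Λ k) = 0 := by
    apply Finset.sum_eq_zero
    intro k _
    simp only [hpdef]
    split_ifs with h
    · rw [h, mul_zero]
    · rw [zero_mul]
  have hDneg : ∑ k, p k * Λ k < 0 := by
    obtain ⟨h1, h2⟩ := Dneg Λ hΛ p hp0 hpsum
    linarith
  have hH : (∑ k, p k * Real.log (p k)) / (∑ k, p k * Λ k) = Lα := by
    have hnum : ∑ k, p k * Real.log (p k) = Lα * ∑ k, p k * Λ k := by
      rw [Finset.mul_sum]
      apply Finset.sum_congr rfl
      intro k _
      simp only [hpdef]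
      split_ifs with h
      · rw [Real.log_exp]; ring
      · simp
    rw [hnum, mul_div_assoc, div_self (ne_of_lt hDneg), mul_one]
  have hLαle : Lα ≤ βstar := by
    apply hub'
    intro q
    have := ub Λ L β hΛ hβE γ p hp0 hpsum hpc q
    rwa [hH] at this
  have hβle : βstar ≤ Lα := by
    by_contra hlt
    push_neg at hlt
    have hΨβ : Ψ βstar < 1 := by
      rw [← hΨLα]
      apply Finset.sum_lt_sum_of_nonempty hKne
      intro k _
      apply Real.exp_lt_exp.2
      exact mul_lt_mul_of_neg_left hlt (hΛ k)
    set δ : ℝ := 1 - Ψ βstar with hδdef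
    have hδpos : 0 < δ := by linarith
    have htail : Tendsto (fun q => ∑ k ∈ univ.filter (fun k => ¬(L k - γ * Λ k = 0)),
        Real.exp (q * (L k - γ * Λ k) + Λ k * βstar)) l (nhds 0) := by
      have : Tendsto (fun q => ∑ k ∈ univ.filter (fun k => ¬(L k - γ * Λ k = 0)),
          Real.exp (q * (L k - γ * Λ k) + Λ k * βstar)) l
          (nhds (∑ k ∈ univ.filter (fun k => ¬(L k - γ * Λ k = 0)), (0:ℝ))) := by
        apply tendsto_finset_sum
        intro k hk
        exact hten k (Finset.mem_filter.1 hk).2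
      simpa using this
    obtain ⟨q, hq⟩ := (htail.eventually_lt_const hδpos).exists
    have hsplit : (1:ℝ) = (∑ k ∈ K, Real.exp (L k * q + Λ k * β q)) +
        ∑ k ∈ univ.filter (fun k => ¬(L k - γ * Λ k = 0)),
          Real.exp (L k * q + Λ k * β q) := by
      rw [hKdef, Finset.sum_filter_add_sum_filter_not, hβE q]
    have hKpart : ∑ k ∈ K, Real.exp (L k * q + Λ k * β q) ≤ Ψ βstar := by
      apply Finset.sum_le_sum
      intro k hk
      apply Real.exp_le_exp.2
      have hck : L k - γ * Λ k = 0 := (Finset.mem_filter.1 hk).2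
      have heq : L k * q + Λ k * β q = Λ k * (γ * q + β q) := by
        have hL : L k = γ * Λ k := by linarith
        rw [hL]; ring
      rw [heq]
      exact mul_le_mul_of_nonpos_left (hlb q) (hΛ k).le
    have hKcpart : ∑ k ∈ univ.filter (fun k => ¬(L k - γ * Λ k = 0)),
        Real.exp (L k * q + Λ k * β q) ≤
        ∑ k ∈ univ.filter (fun k => ¬(L k - γ * Λ k = 0)),
          Real.exp (q * (L k - γ * Λ k) + Λ k * βstar) := by
      apply Finset.sum_le_sum
      intro k _
      apply Real.exp_le_exp.2
      have heq : L k * q + Λ k * β q = q * (L k - γ * Λ k) + Λ k * (γ * q + β q) := by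
        ring
      rw [heq]
      have h1 : Λ k * (γ * q + β q) ≤ Λ k * βstar :=
        mul_le_mul_of_nonpos_left (hlb q) (hΛ k).le
      linarith
    linarith [hsplit, hKpart, le_trans hKcpart (le_of_lt hq)]
  refine ⟨p, hp0, hpsum, hpc, ?_⟩
  rw [hH]
  linarith

end Stmt10Aux
theorem stmt_10 {ι : Type*} [Fintype ι] (hcard : 2 ≤ Fintype.card ι)
    (a d : ι → ℝ) (ha : ∀ k, 0 < a k ∧ a k < 1)
    (hd : ∀ k, 0 < |d k| ∧ |d k| < 1)
    (αmin αmax : ℝ)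
    (hαmin : IsLeast (Set.range fun k => Real.log |d k| / Real.log (a k)) αmin)
    (hαmax : IsGreatest (Set.range fun k => Real.log |d k| / Real.log (a k)) αmax)
    (β : ℝ → ℝ) (hβ : ∀ q : ℝ, ∑ k, |d k| ^ q * a k ^ β q = 1)
    (α : ℝ) (hα : αmin ≤ α ∧ α ≤ αmax)
    (βstar : ℝ) (hβstar : IsGLB (Set.range fun q => α * q + β q) βstar) :
    IsGreatest {y : ℝ | ∃ p : ι → ℝ, (∀ k, 0 ≤ p k) ∧ ∑ k, p k = 1 ∧
        ∑ k, p k * (Real.log |d k| - α * Real.log (a k)) = 0 ∧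
        y = (∑ k, p k * Real.log (p k)) / (∑ k, p k * Real.log (a k))} βstar := by
  classical
  haveI hne : Nonempty ι := Fintype.card_pos_iff.mp (by omega)
  set Λ : ι → ℝ := fun k => Real.log (a k) with hΛdef
  set L : ι → ℝ := fun k => Real.log |d k| with hLdef
  have hΛ : ∀ k, Λ k < 0 := fun k => Real.log_neg (ha k).1 (ha k).2
  have hL : ∀ k, L k < 0 := fun k => Real.log_neg (hd k).1 (hd k).2
  have hβE : ∀ q : ℝ, ∑ k, Real.exp (L k * q + Λ k * β q) = 1 := by
    intro q
    rw [← hβ q]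
    apply Finset.sum_congr rfl
    intro k _
    rw [Real.rpow_def_of_pos (hd k).1, Real.rpow_def_of_pos (ha k).1, ← Real.exp_add]
  -- index attaining the min and the max
  obtain ⟨k0, hk0'⟩ := hαmin.1
  obtain ⟨k1, hk1'⟩ := hαmax.1
  have hk0 : L k0 - αmin * Λ k0 = 0 := by
    have := (div_eq_iff (ne_of_lt (hΛ k0))).1 hk0'
    linarith
  have hk1 : L k1 - αmax * Λ k1 = 0 := by
    have := (div_eq_iff (ne_of_lt (hΛ k1))).1 hk1'
    linarith
  have hminle : ∀ k, L k - αmin * Λ k ≤ 0 := by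
    intro k
    have h1 : αmin ≤ L k / Λ k := hαmin.2 ⟨k, rfl⟩
    have := (le_div_iff_of_neg (hΛ k)).1 h1
    linarith
  have hmaxge : ∀ k, 0 ≤ L k - αmax * Λ k := by
    intro k
    have h1 : L k / Λ k ≤ αmax := hαmax.2 ⟨k, rfl⟩
    have := (div_le_iff_of_neg (hΛ k)).1 h1
    linarith
  -- the upper bound half of IsGreatest
  have hUB : ∀ y ∈ {y : ℝ | ∃ p : ι → ℝ, (∀ k, 0 ≤ p k) ∧ ∑ k, p k = 1 ∧
      ∑ k, p k * (L k - α * Λ k) = 0 ∧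
      y = (∑ k, p k * Real.log (p k)) / (∑ k, p k * Λ k)}, y ≤ βstar := by
    rintro y ⟨p, hp0, hps, hpc, rfl⟩
    apply hβstar.2
    rintro x ⟨q, rfl⟩
    exact Stmt10Aux.ub Λ L β hΛ hβE α p hp0 hps hpc q
  -- the two "pressure is nonnegative" bounds, via point masses
  have hpoint : ∀ (γ : ℝ) (j : ι), L j - γ * Λ j = 0 → ∀ q, 0 ≤ γ * q + β q := by
    intro γ j hj q
    set p0 : ι → ℝ := fun k => if k = j then (1:ℝ) else 0 with hp0def
    have hp00 : ∀ k, 0 ≤ p0 k := by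
      intro k; simp only [hp0def]; split_ifs <;> norm_num
    have hp0s : ∑ k, p0 k = 1 := by
      simp [hp0def]
    have hp0c : ∑ k, p0 k * (L k - γ * Λ k) = 0 := by
      simp only [hp0def, ite_mul, one_mul, zero_mul]
      rw [Finset.sum_ite_eq' Finset.univ j (fun k => L k - γ * Λ k)]
      simp [hj]
    have hnum0 : ∑ k, p0 k * Real.log (p0 k) = 0 := by
      apply Finset.sum_eq_zero
      intro k _
      simp only [hp0def]
      split_ifs <;> simp
    have := Stmt10Aux.ub Λ L β hΛ hβE γ p0 hp00 hp0s hp0c q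
    rwa [hnum0, zero_div] at this
  have h0min : ∀ q, 0 ≤ αmin * q + β q := hpoint αmin k0 hk0
  have h0max : ∀ q, 0 ≤ αmax * q + β q := hpoint αmax k1 hk1
  constructor
  · -- membership
    rcases eq_or_lt_of_le hα.1 with hc1 | hc1
    · -- α = αmin : boundary case at the minimum
      have hten : ∀ k, L k - α * Λ k ≠ 0 →
          Filter.Tendsto (fun q => Real.exp (q * (L k - α * Λ k) + Λ k * βstar))
            Filter.atTop (nhds 0) := by
        intro k hck
        have hcneg : L k - α * Λ k < 0 :=
          lt_of_le_of_ne (by rw [← hc1]; exact hminle k) hck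
        have h1 : Filter.Tendsto (fun q : ℝ => q * (L k - α * Λ k)) Filter.atTop
            Filter.atBot := (tendsto_mul_const_atBot_of_neg hcneg).2 Filter.tendsto_id
        have h2 : Filter.Tendsto (fun q : ℝ => Real.exp (q * (L k - α * Λ k)))
            Filter.atTop (nhds 0) := Real.tendsto_exp_atBot.comp h1
        have h3 := h2.mul_const (Real.exp (Λ k * βstar))
        simpa [← Real.exp_add] using h3
      obtain ⟨p, h1, h2, h3, h4⟩ := Stmt10Aux.boundary Λ L β hΛ hβE α βstar
        ⟨k0, by rw [← hc1]; exact hk0⟩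
        (fun q => hβstar.1 ⟨q, rfl⟩)
        (fun y hy => hβstar.2 (by rintro x ⟨q, rfl⟩; exact hy q))
        Filter.atTop hten
      exact ⟨p, h1, h2, h3, h4⟩
    rcases eq_or_lt_of_le hα.2 with hc2 | hc2
    · -- α = αmax : boundary case at the maximum
      have hten : ∀ k, L k - α * Λ k ≠ 0 →
          Filter.Tendsto (fun q => Real.exp (q * (L k - α * Λ k) + Λ k * βstar))
            Filter.atBot (nhds 0) := by
        intro k hck
        have hcpos : 0 < L k - α * Λ k :=
          lt_of_le_of_ne (by rw [hc2]; exact hmaxge k) (Ne.symm hck)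
        have h1 : Filter.Tendsto (fun q : ℝ => q * (L k - α * Λ k)) Filter.atBot
            Filter.atBot := (tendsto_mul_const_atBot_of_pos hcpos).2 Filter.tendsto_id
        have h2 : Filter.Tendsto (fun q : ℝ => Real.exp (q * (L k - α * Λ k)))
            Filter.atBot (nhds 0) := Real.tendsto_exp_atBot.comp h1
        have h3 := h2.mul_const (Real.exp (Λ k * βstar))
        simpa [← Real.exp_add] using h3
      obtain ⟨p, h1, h2, h3, h4⟩ := Stmt10Aux.boundary Λ L β hΛ hβE α βstar
        ⟨k1, by rw [hc2]; exact hk1⟩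
        (fun q => hβstar.1 ⟨q, rfl⟩)
        (fun y hy => hβstar.2 (by rintro x ⟨q, rfl⟩; exact hy q))
        Filter.atBot hten
      exact ⟨p, h1, h2, h3, h4⟩
    · -- interior case : αmin < α < αmax
      have hcont : Continuous β :=
        Stmt10Aux.beta_cont Λ L β hΛ hβE αmax αmin hmaxge hminle
      set P : ℝ → ι → ℝ := fun q k => Real.exp (L k * q + Λ k * β q) with hPdef
      set N : ℝ → ℝ := fun q => ∑ k, P q k * L k with hNdef
      set D : ℝ → ℝ := fun q => ∑ k, P q k * Λ k with hDdef
      have hPc : ∀ k, Continuous (fun q => P q k) := by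
        intro k
        apply Real.continuous_exp.comp
        exact (continuous_const.mul continuous_id).add (continuous_const.mul hcont)
      have hNc : Continuous N :=
        continuous_finset_sum _ fun k _ => (hPc k).mul continuous_const
      have hDc : Continuous D :=
        continuous_finset_sum _ fun k _ => (hPc k).mul continuous_const
      have hDne : ∀ q, D q < 0 := by
        intro q
        obtain ⟨hh1, hh2⟩ := Stmt10Aux.Dneg Λ hΛ (P q)
          (fun k => (Real.exp_pos _).le) (hβE q)
        exact lt_of_le_of_lt hh1 hh2
      have htop : Filter.Tendsto (fun q => N q / D q) Filter.atTop (nhds αmin) := by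
        apply Stmt10Aux.alpha_tendsto Λ L β hΛ hβE αmin Filter.atTop _ h0min
        intro k hck
        have hcneg : L k - αmin * Λ k < 0 := lt_of_le_of_ne (hminle k) hck
        have h1 : Filter.Tendsto (fun q : ℝ => q * (L k - αmin * Λ k)) Filter.atTop
            Filter.atBot := (tendsto_mul_const_atBot_of_neg hcneg).2 Filter.tendsto_id
        have h2 := (Real.tendsto_exp_atBot.comp h1).const_mul |L k - αmin * Λ k|
        simpa using h2
      have hbot : Filter.Tendsto (fun q => N q / D q) Filter.atBot (nhds αmax) := by
        apply Stmt10Aux.alpha_tendsto Λ L β hΛ hβE αmax Filter.atBot _ h0max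
        intro k hck
        have hcpos : 0 < L k - αmax * Λ k := lt_of_le_of_ne (hmaxge k) (Ne.symm hck)
        have h1 : Filter.Tendsto (fun q : ℝ => q * (L k - αmax * Λ k)) Filter.atBot
            Filter.atBot := (tendsto_mul_const_atBot_of_pos hcpos).2 Filter.tendsto_id
        have h2 := (Real.tendsto_exp_atBot.comp h1).const_mul |L k - αmax * Λ k|
        simpa using h2
      obtain ⟨q1, hq1⟩ := (htop.eventually_lt_const hc1).exists
      obtain ⟨q2, hq2⟩ := (hbot.eventually_const_lt hc2).exists
      have hαfc : Continuous (fun q => N q / D q) :=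
        hNc.div hDc (fun q => ne_of_lt (hDne q))
      have hmem : α ∈ Set.uIcc (N q2 / D q2) (N q1 / D q1) :=
        Set.mem_uIcc.2 (Or.inr ⟨le_of_lt hq1, le_of_lt hq2⟩)
      obtain ⟨q0, _, hq0⟩ := intermediate_value_uIcc
        (hαfc.continuousOn (s := Set.uIcc q2 q1)) hmem
      -- the optimal probability vector
      refine ⟨fun k => P q0 k, fun k => (Real.exp_pos _).le, hβE q0, ?_, ?_⟩
      · have hND : N q0 = α * D q0 := by
          have := (div_eq_iff (ne_of_lt (hDne q0))).1 hq0
          linarith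
        have hexp : ∑ k, P q0 k * (L k - α * Λ k) = N q0 - α * D q0 := by
          rw [hNdef, hDdef]
          simp only [Finset.mul_sum, ← Finset.sum_sub_distrib]
          apply Finset.sum_congr rfl
          intro k _
          ring
        rw [hexp, hND]
        ring
      · have hND : N q0 = α * D q0 := by
          have := (div_eq_iff (ne_of_lt (hDne q0))).1 hq0
          linarith
        have hnum : ∑ k, P q0 k * Real.log (P q0 k) = (α * q0 + β q0) * D q0 := by
          have e1 : ∑ k, P q0 k * Real.log (P q0 k)
              = q0 * N q0 + β q0 * D q0 := by
            rw [hNdef, hDdef]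
            simp only [Finset.mul_sum, ← Finset.sum_add_distrib]
            apply Finset.sum_congr rfl
            intro k _
            rw [hPdef]
            simp only [Real.log_exp]
            ring
          rw [e1, hND]
          ring
        have hval : (∑ k, P q0 k * Real.log (P q0 k)) / (∑ k, P q0 k * Λ k)
            = α * q0 + β q0 := by
          have hDq : (∑ k, P q0 k * Λ k) = D q0 := rfl
          rw [hDq, hnum, mul_div_assoc, div_self (ne_of_lt (hDne q0)), mul_one]
        rw [hval]
        apply le_antisymm
        · exact hβstar.1 ⟨q0, rfl⟩
        · apply hβstar.2
          rintro x ⟨q, rfl⟩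
          have := Stmt10Aux.ub Λ L β hΛ hβE α (fun k => P q0 k)
            (fun k => (Real.exp_pos _).le) (hβE q0) ?_ q
          · rwa [hval] at this
          · have hND : N q0 = α * D q0 := by
              have := (div_eq_iff (ne_of_lt (hDne q0))).1 hq0
              linarith
            have hexp : ∑ k, P q0 k * (L k - α * Λ k) = N q0 - α * D q0 := by
              rw [hNdef, hDdef]
              simp only [Finset.mul_sum, ← Finset.sum_sub_distrib]
              apply Finset.sum_congr rfl
              intro k _
              ring
            rw [hexp, hND]
            ring
  · exact hUB
end

section
/- Assume 0 < a_k < 1 and |d_k| < a_k for each k ∈ I_+ (finite, size ≥ 2). Let σ > 0 satisfy ∑_{k∈I_+}(|d_k|/a_k)^σ = 1, p_k* := (|d_k|/a_k)^σ, and α_0 := (∑ p_k* log|d_k|)/(∑ p_k* log a_k). For α > 1, define h(α) as the maximum of ((α−1) ∑ p_k log p_k)/(∑ p_k (log|d_k| − log a_k)) over probability vectors p with ∑ p_k(log|d_k| − α log a_k) ≤ 0. Then h(α) = σ(α − 1) for 1 < α ≤ α_0, and h(α) = β*(α) for α_0 ≤ α ≤ α_max, where β*(α) := inf_q (αq + β(q))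 with β defined by ∑ |d_k|^q a_k^{β(q)} = 1 and α_max := max_k log|d_k|/log a_k. -/
open Real Finset Filter

section
variable {ι : Type*} [Fintype ι] [Nonempty ι]

lemma le_beta (a d : ι → ℝ) (β : ℝ → ℝ) (ha : ∀ k, 0 < a k ∧ a k < 1) (hd0 : ∀ k, 0 < |d k|)
    (hβ : ∀ q : ℝ, ∑ k, |d k| ^ q * a k ^ β q = 1)
    {q b : ℝ} (hb : 1 ≤ ∑ k, |d k| ^ q * a k ^ b) : b ≤ β q := by
  by_contra hc
  push_neg at hc
  have : ∑ k, |d k| ^ q * a k ^ b < ∑ k, |d k| ^ q * a k ^ (β q) := by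
    apply Finset.sum_lt_sum_of_nonempty univ_nonempty
    intro k _
    apply mul_lt_mul_of_pos_left _ (Real.rpow_pos_of_pos (hd0 k) q)
    exact Real.rpow_lt_rpow_of_exponent_gt (ha k).1 (ha k).2 hc
  rw [hβ q] at this
  linarith

lemma beta_le (a d : ι → ℝ) (β : ℝ → ℝ) (ha : ∀ k, 0 < a k ∧ a k < 1) (hd0 : ∀ k, 0 < |d k|)
    (hβ : ∀ q : ℝ, ∑ k, |d k| ^ q * a k ^ β q = 1)
    {q b : ℝ} (hb : ∑ k, |d k| ^ q * a k ^ b ≤ 1) : β q ≤ b := by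
  by_contra hc
  push_neg at hc
  have : ∑ k, |d k| ^ q * a k ^ (β q) < ∑ k, |d k| ^ q * a k ^ b := by
    apply Finset.sum_lt_sum_of_nonempty univ_nonempty
    intro k _
    apply mul_lt_mul_of_pos_left _ (Real.rpow_pos_of_pos (hd0 k) q)
    exact Real.rpow_lt_rpow_of_exponent_gt (ha k).1 (ha k).2 hc
  rw [hβ q] at this
  linarith

omit [Fintype ι] [Nonempty ι] in
lemma term_exp (a d : ι → ℝ) (ha : ∀ k, 0 < a k ∧ a k < 1) (hd0 : ∀ k, 0 < |d k|)
    (k : ι) (q b : ℝ) :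
    |d k| ^ q * a k ^ b = exp (q * log |d k| + b * log (a k)) := by
  rw [Real.rpow_def_of_pos (hd0 k), Real.rpow_def_of_pos (ha k).1, ← Real.exp_add]
  ring_nf

lemma beta_continuous (a d : ι → ℝ) (β : ℝ → ℝ) (ha : ∀ k, 0 < a k ∧ a k < 1)
    (hd0 : ∀ k, 0 < |d k|) (hβ : ∀ q : ℝ, ∑ k, |d k| ^ q * a k ^ β q = 1) :
    Continuous β := by
  obtain ⟨kM, -, hkM⟩ := Finset.exists_max_image univ a univ_nonempty
  obtain ⟨kD, -, hkD⟩ := Finset.exists_max_image univ (fun k => |log (|d k|)|) univ_nonempty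
  set c0 : ℝ := -log (a kM) with hc0
  have hc0pos : 0 < c0 := by
    have := Real.log_neg (ha kM).1 (ha kM).2
    simp only [hc0]; linarith
  set M : ℝ := |log (|d kD|)| with hMdef
  have hM0 : 0 ≤ M := abs_nonneg _
  set L : ℝ := M / c0 with hL
  have hL0 : 0 ≤ L := div_nonneg hM0 hc0pos.le
  have hLc0 : L * c0 = M := by rw [hL, div_mul_cancel₀ _ (ne_of_gt hc0pos)]
  have hloga : ∀ k, log (a k) ≤ -c0 := by
    intro k
    have := Real.log_le_log (ha k).1 (hkM k (mem_univ k))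
    simp only [hc0]; linarith
  have key : ∀ q q', β q' ≤ β q + L * |q' - q| ∧ β q - L * |q' - q| ≤ β q' := by
    intro q q'
    have habs : 0 ≤ |q' - q| := abs_nonneg _
    have hbd1 : ∀ k, (q' - q) * log |d k| ≤ |q' - q| * M := by
      intro k
      calc (q' - q) * log |d k| ≤ |(q' - q) * log (|d k|)| := le_abs_self _
        _ = |q' - q| * |log (|d k|)| := abs_mul _ _
        _ ≤ |q' - q| * M := by
            exact mul_le_mul_of_nonneg_left (hkD k (mem_univ k)) habs
    have hbd2 : ∀ k, -(|q' - q| * M) ≤ (q' - q) * log |d k| := by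
      intro k
      have : |(q' - q) * log (|d k|)| ≤ |q' - q| * M := by
        rw [abs_mul]; exact mul_le_mul_of_nonneg_left (hkD k (mem_univ k)) habs
      have := neg_abs_le ((q' - q) * log |d k|)
      linarith
    constructor
    · apply beta_le a d β ha hd0 hβ
      have hterm : ∀ k, |d k| ^ q' * a k ^ (β q + L * |q' - q|) ≤ |d k| ^ q * a k ^ (β q) := by
        intro k
        rw [term_exp a d ha hd0, term_exp a d ha hd0]
        apply Real.exp_le_exp.2
        have h1 : (L * |q' - q|) * log (a k) ≤ (L * |q' - q|) * (-c0) :=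
          mul_le_mul_of_nonneg_left (hloga k) (by positivity)
        have h2 := hbd1 k
        have h3 : L * |q' - q| * c0 = |q' - q| * M := by rw [← hLc0]; ring
        linarith
      calc ∑ k, |d k| ^ q' * a k ^ (β q + L * |q' - q|)
          ≤ ∑ k, |d k| ^ q * a k ^ (β q) := Finset.sum_le_sum fun k _ => hterm k
        _ = 1 := hβ q
    · apply le_beta a d β ha hd0 hβ
      have hterm : ∀ k, |d k| ^ q * a k ^ (β q) ≤ |d k| ^ q' * a k ^ (β q - L * |q' - q|) := by
        intro k
        rw [term_exp a d ha hd0, term_exp a d ha hd0]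
        apply Real.exp_le_exp.2
        have h1 : (L * |q' - q|) * log (a k) ≤ (L * |q' - q|) * (-c0) :=
          mul_le_mul_of_nonneg_left (hloga k) (by positivity)
        have h2 := hbd2 k
        have h3 : L * |q' - q| * c0 = |q' - q| * M := by rw [← hLc0]; ring
        linarith
      calc (1:ℝ) = ∑ k, |d k| ^ q * a k ^ (β q) := (hβ q).symm
        _ ≤ ∑ k, |d k| ^ q' * a k ^ (β q - L * |q' - q|) := Finset.sum_le_sum fun k _ => hterm k
  have hlip : LipschitzWith (Real.toNNReal L) β := by
    rw [lipschitzWith_iff_dist_le_mul]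
    intro x y
    rw [Real.dist_eq, Real.dist_eq, Real.coe_toNNReal L hL0]
    have h1 := (key y x).1
    have h2 := (key y x).2
    rw [abs_le]
    constructor <;> linarith
  exact hlip.continuous


lemma tendsto_sum_exp (s : Finset ι) (e w : ι → ℝ) (he : ∀ k ∈ s, 0 < e k) :
    Tendsto (fun q => ∑ k ∈ s, w k * exp (q * e k)) atBot (nhds 0) := by
  have h : Tendsto (fun q => ∑ k ∈ s, w k * exp (q * e k)) atBot (nhds (∑ k ∈ s, w k * 0)) := by
    apply tendsto_finset_sum
    intro k hk
    exact (Real.tendsto_exp_atBot.comp (Filter.Tendsto.atBot_mul_const (he k hk) tendsto_id)).const_mul (w k)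
  simpa using h

lemma gibbs (p r : ι → ℝ) (hp : ∀ k, 0 ≤ p k) (hr : ∀ k, 0 < r k)
    (hp1 : ∑ k, p k = 1) (hr1 : ∑ k, r k = 1) :
    ∑ k, p k * Real.log (r k) ≤ ∑ k, p k * Real.log (p k) := by
  have key : ∀ k, p k * Real.log (r k) - p k * Real.log (p k) ≤ r k - p k := by
    intro k
    rcases eq_or_lt_of_le (hp k) with h0 | h0
    · simp [← h0]; exact le_of_lt (hr k)
    · have hlog : Real.log (r k) - Real.log (p k) = Real.log (r k / p k) := by
        rw [Real.log_div (ne_of_gt (hr k)) (ne_of_gt h0)]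
      have h2 : Real.log (r k / p k) ≤ r k / p k - 1 :=
        Real.log_le_sub_one_of_pos (div_pos (hr k) h0)
      have h3 : p k * Real.log (r k / p k) ≤ p k * (r k / p k - 1) :=
        mul_le_mul_of_nonneg_left h2 (le_of_lt h0)
      have h4 : p k * (r k / p k - 1) = r k - p k := by field_simp
      calc p k * Real.log (r k) - p k * Real.log (p k) = p k * (Real.log (r k) - Real.log (p k)) := by ring
        _ = p k * Real.log (r k / p k) := by rw [hlog]
        _ ≤ r k - p k := h4 ▸ h3
  have := Finset.sum_le_sum (fun k (_ : k ∈ Finset.univ) => key k)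
  rw [Finset.sum_sub_distrib, Finset.sum_sub_distrib, hp1, hr1] at this
  linarith

end

set_option maxHeartbeats 2000000 in
theorem stmt_11 {ι : Type*} [Fintype ι] (hcard : 2 ≤ Fintype.card ι)
    (a d : ι → ℝ) (ha : ∀ k, 0 < a k ∧ a k < 1)
    (hd : ∀ k, 0 < |d k| ∧ |d k| < a k)
    (σ : ℝ) (hσ : 0 < σ) (hσeq : ∑ k, (|d k| / a k) ^ σ = 1)
    (pstar : ι → ℝ) (hpstar : ∀ k, pstar k = (|d k| / a k) ^ σ)
    (α0 : ℝ)
    (hα0 : α0 = (∑ k, pstar k * Real.log |d k|) / (∑ k, pstar k * Real.log (a k)))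
    (αmax : ℝ)
    (hαmax : IsGreatest (Set.range fun k => Real.log |d k| / Real.log (a k)) αmax)
    (β : ℝ → ℝ) (hβ : ∀ q : ℝ, ∑ k, |d k| ^ q * a k ^ β q = 1)
    (α : ℝ) (hα : 1 < α)
    (βstar : ℝ) (hβstar : IsGLB (Set.range fun q => α * q + β q) βstar)
    (h : ℝ)
    (hh : IsGreatest {y : ℝ | ∃ p : ι → ℝ, (∀ k, 0 ≤ p k) ∧ ∑ k, p k = 1 ∧
        ∑ k, p k * (Real.log |d k| - α * Real.log (a k)) ≤ 0 ∧
        y = ((α - 1) * ∑ k, p k * Real.log (p k)) /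
          (∑ k, p k * (Real.log |d k| - Real.log (a k)))} h) :
    (α ≤ α0 → h = σ * (α - 1)) ∧ (α0 ≤ α → α ≤ αmax → h = βstar) := by
  classical
  haveI hne : Nonempty ι := Fintype.card_pos_iff.1 (by omega)
  have ha0 : ∀ k, 0 < a k := fun k => (ha k).1
  have hd0 : ∀ k, 0 < |d k| := fun k => (hd k).1
  have hla : ∀ k, log (a k) < 0 := fun k => Real.log_neg (ha0 k) (ha k).2
  have hld : ∀ k, log |d k| < log (a k) := fun k => Real.log_lt_log (hd0 k) (hd k).2
  have hterm : ∀ (k : ι) (q b : ℝ), |d k| ^ q * a k ^ b = exp (q * log |d k| + b * log (a k)) :=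
    term_exp a d ha hd0
  have hpse : ∀ k, pstar k = exp (σ * (log |d k| - log (a k))) := by
    intro k
    rw [hpstar k, Real.rpow_def_of_pos (div_pos (hd0 k) (ha0 k)),
      Real.log_div (ne_of_gt (hd0 k)) (ne_of_gt (ha0 k))]
    ring_nf
  have hps_pos : ∀ k, 0 < pstar k := fun k => by rw [hpse k]; exact Real.exp_pos _
  have hps1 : ∑ k, pstar k = 1 := by
    calc ∑ k, pstar k = ∑ k, (|d k| / a k) ^ σ := Finset.sum_congr rfl fun k _ => hpstar k
      _ = 1 := hσeq
  have hlogps : ∀ k, log (pstar k) = σ * (log |d k| - log (a k)) := fun k => by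
    rw [hpse k, Real.log_exp]
  have hSa_neg : ∑ k, pstar k * log (a k) < 0 := by
    have h1 : ∀ k ∈ univ, pstar k * log (a k) < (fun _ : ι => (0:ℝ)) k := fun k _ =>
      mul_neg_of_pos_of_neg (hps_pos k) (hla k)
    have := Finset.sum_lt_sum_of_nonempty univ_nonempty h1
    simpa using this
  have hSd_eq : ∑ k, pstar k * log |d k| = α0 * ∑ k, pstar k * log (a k) := by
    rw [hα0]; exact (div_mul_cancel₀ _ (ne_of_lt hSa_neg)).symm
  have hDneg : ∀ p : ι → ℝ, (∀ k, 0 ≤ p k) → ∑ k, p k = 1 →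
      ∑ k, p k * (log |d k| - log (a k)) < 0 := by
    intro p hp hp1
    obtain ⟨k1, -, hk1⟩ := Finset.exists_ne_zero_of_sum_ne_zero (hp1 ▸ (one_ne_zero : (1:ℝ) ≠ 0))
    have hk1pos : 0 < p k1 := lt_of_le_of_ne (hp k1) (Ne.symm hk1)
    have := Finset.sum_lt_sum (f := fun k => p k * (log |d k| - log (a k)))
      (g := fun _ : ι => (0:ℝ))
      (fun k _ => mul_nonpos_of_nonneg_of_nonpos (hp k) (by linarith [hld k]))
      ⟨k1, mem_univ k1, mul_neg_of_pos_of_neg hk1pos (by linarith [hld k1])⟩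
    simpa using this
  have hsplit : ∀ (p : ι → ℝ) (c : ℝ), ∑ k, p k * (log |d k| - c * log (a k))
      = (∑ k, p k * log |d k|) - c * ∑ k, p k * log (a k) := by
    intro p c
    rw [Finset.mul_sum, ← Finset.sum_sub_distrib]
    exact Finset.sum_congr rfl fun k _ => by ring
  have hsplit1 : ∀ p : ι → ℝ, ∑ k, p k * (log |d k| - log (a k))
      = (∑ k, p k * log |d k|) - ∑ k, p k * log (a k) := by
    intro p
    rw [← Finset.sum_sub_distrib]
    exact Finset.sum_congr rfl fun k _ => by ring
  have hβexp : ∀ q : ℝ, ∑ k, exp (q * log |d k| + β q * log (a k)) = 1 := by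
    intro q
    rw [← hβ q]
    exact Finset.sum_congr rfl fun k _ => (hterm k q (β q)).symm
  have hgibbs : ∀ (q : ℝ) (p : ι → ℝ), (∀ k, 0 ≤ p k) → ∑ k, p k = 1 →
      q * (∑ k, p k * log |d k|) + β q * (∑ k, p k * log (a k)) ≤ ∑ k, p k * log (p k) := by
    intro q p hp hp1
    have hr : ∀ k, 0 < |d k| ^ q * a k ^ β q := fun k =>
      mul_pos (Real.rpow_pos_of_pos (hd0 k) q) (Real.rpow_pos_of_pos (ha0 k) _)
    have hg := gibbs p (fun k => |d k| ^ q * a k ^ β q) hp hr hp1 (hβ q)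
    have hlr : ∀ k, log (|d k| ^ q * a k ^ β q) = q * log |d k| + β q * log (a k) := by
      intro k; rw [hterm]; exact Real.log_exp _
    calc q * (∑ k, p k * log |d k|) + β q * (∑ k, p k * log (a k))
        = ∑ k, p k * log (|d k| ^ q * a k ^ β q) := by
          rw [Finset.mul_sum, Finset.mul_sum, ← Finset.sum_add_distrib]
          exact Finset.sum_congr rfl fun k _ => by rw [hlr k]; ring
      _ ≤ _ := hg
  have hval_le : ∀ p : ι → ℝ, (∀ k, 0 ≤ p k) → ∑ k, p k = 1 →
      ((α - 1) * ∑ k, p k * log (p k)) / (∑ k, p k * (log |d k| - log (a k))) ≤ σ * (α - 1) := by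
    intro p hp hp1
    have hD := hDneg p hp hp1
    have hg := gibbs p pstar hp hps_pos hp1 hps1
    have heq1 : ∑ k, p k * log (pstar k) = σ * ∑ k, p k * (log |d k| - log (a k)) := by
      rw [Finset.mul_sum]
      exact Finset.sum_congr rfl fun k _ => by rw [hlogps k]; ring
    have hlow : σ * (∑ k, p k * (log |d k| - log (a k))) ≤ ∑ k, p k * log (p k) := by
      rw [← heq1]; exact hg
    rw [div_le_iff_of_neg hD]
    have h2 := mul_le_mul_of_nonneg_left hlow (by linarith : (0:ℝ) ≤ α - 1)
    nlinarith [h2]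
  have h_le_sig : h ≤ σ * (α - 1) := by
    obtain ⟨phat, hph0, hph1, hphC, hphv⟩ := hh.1
    rw [hphv]; exact hval_le phat hph0 hph1
  have part1 : α ≤ α0 → h = σ * (α - 1) := by
    intro hαα0
    apply le_antisymm h_le_sig
    apply hh.2
    refine ⟨pstar, fun k => le_of_lt (hps_pos k), hps1, ?_, ?_⟩
    · rw [hsplit pstar α, hSd_eq]
      nlinarith [hSa_neg]
    · have hEs : ∑ k, pstar k * log (pstar k) = σ * ∑ k, pstar k * (log |d k| - log (a k)) := by
        rw [Finset.mul_sum]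
        exact Finset.sum_congr rfl fun k _ => by rw [hlogps k]; ring
      have hDs : ∑ k, pstar k * (log |d k| - log (a k)) < 0 :=
        hDneg pstar (fun k => (hps_pos k).le) hps1
      rw [hEs, eq_div_iff (ne_of_lt hDs)]
      ring
  have hweak : ∀ q : ℝ, 0 ≤ q + β q → ∀ p : ι → ℝ, (∀ k, 0 ≤ p k) → ∑ k, p k = 1 →
      ∑ k, p k * (log |d k| - α * log (a k)) ≤ 0 →
      ((α - 1) * ∑ k, p k * log (p k)) / (∑ k, p k * (log |d k| - log (a k))) ≤ α * q + β q := by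
    intro q ht p hp hp1 hC
    have hD := hDneg p hp hp1
    have hE := hgibbs q p hp hp1
    rw [hsplit p α] at hC
    rw [hsplit1 p] at hD ⊢
    rw [div_le_iff_of_neg hD]
    have h1 : 0 ≤ (q + β q) * (α * (∑ k, p k * log (a k)) - ∑ k, p k * log |d k|) :=
      mul_nonneg ht (by linarith)
    have h2 := mul_le_mul_of_nonneg_left hE (by linarith : (0:ℝ) ≤ α - 1)
    nlinarith [h1, h2]
  have hβ_ge : ∀ q : ℝ, -σ - α0 * (q - σ) ≤ β q := by
    intro q
    apply le_beta a d β ha hd0 hβ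
    have hterm2 : ∀ k, pstar k * (1 + (q - σ) * (log |d k| - α0 * log (a k)))
        ≤ |d k| ^ q * a k ^ (-σ - α0 * (q - σ)) := by
      intro k
      rw [hterm k]
      have hre : exp (q * log |d k| + (-σ - α0 * (q - σ)) * log (a k))
          = pstar k * exp ((q - σ) * (log |d k| - α0 * log (a k))) := by
        rw [hpse k, ← Real.exp_add]; congr 1; ring
      rw [hre]
      have h1 := Real.add_one_le_exp ((q - σ) * (log |d k| - α0 * log (a k)))
      have h2 := mul_le_mul_of_nonneg_left h1 (le_of_lt (hps_pos k))
      linarith [h2]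
    calc (1:ℝ) = ∑ k, pstar k * (1 + (q - σ) * (log |d k| - α0 * log (a k))) := by
          have he2 : ∑ k, pstar k * (1 + (q - σ) * (log |d k| - α0 * log (a k)))
              = (∑ k, pstar k) + (q - σ) * ∑ k, pstar k * (log |d k| - α0 * log (a k)) := by
            rw [Finset.mul_sum, ← Finset.sum_add_distrib]
            exact Finset.sum_congr rfl fun k _ => by ring
          rw [he2, hps1, hsplit pstar α0, hSd_eq]
          ring
      _ ≤ _ := Finset.sum_le_sum fun k _ => hterm2 k
  have hdivform : ∀ (k : ι) (t : ℝ), (|d k| / a k) ^ t = |d k| ^ t * a k ^ (-t) := by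
    intro k t
    rw [Real.div_rpow (abs_nonneg _) (le_of_lt (ha0 k)), Real.rpow_neg (le_of_lt (ha0 k)),
      div_eq_mul_inv]
  have hβ_ge2 : ∀ q : ℝ, q ≤ σ → -q ≤ β q := by
    intro q hq
    apply le_beta a d β ha hd0 hβ
    have h1 : ∀ k, (|d k| / a k) ^ σ ≤ (|d k| / a k) ^ q := fun k =>
      Real.rpow_le_rpow_of_exponent_ge (div_pos (hd0 k) (ha0 k))
        (le_of_lt ((div_lt_one (ha0 k)).2 (hd k).2)) hq
    calc (1:ℝ) = ∑ k, (|d k| / a k) ^ σ := hσeq.symm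
      _ ≤ ∑ k, (|d k| / a k) ^ q := Finset.sum_le_sum fun k _ => h1 k
      _ = ∑ k, |d k| ^ q * a k ^ (-q) := Finset.sum_congr rfl fun k _ => hdivform k q
  have hβσ : β σ = -σ := by
    have he : ∑ k, |d k| ^ (σ:ℝ) * a k ^ (-σ:ℝ) = 1 := by
      rw [← hσeq]
      exact Finset.sum_congr rfl fun k _ => (hdivform k σ).symm
    exact le_antisymm (beta_le a d β ha hd0 hβ (le_of_eq he)) (le_beta a d β ha hd0 hβ (ge_of_eq he))
  have hrσ : ∀ k, exp (σ * log |d k| + β σ * log (a k)) = pstar k := by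
    intro k; rw [hβσ, hpse k]; congr 1; ring
  obtain ⟨k0, hk0⟩ := hαmax.1
  have hk0eq : log |d k0| = αmax * log (a k0) := by
    simp only at hk0
    exact (div_eq_iff (ne_of_lt (hla k0))).1 hk0
  have hαmax_ge : ∀ k, αmax * log (a k) ≤ log |d k| := by
    intro k
    have h1 : log |d k| / log (a k) ≤ αmax := hαmax.2 ⟨k, rfl⟩
    rwa [div_le_iff_of_neg (hla k)] at h1
  have hαmax1 : 1 < αmax := by
    have h1 : αmax * log (a k0) < log (a k0) := hk0eq ▸ hld k0
    nlinarith [hla k0]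
  have hT0 : ∀ q : ℝ, 0 ≤ αmax * q + β q := by
    intro q
    have h1 : |d k0| ^ q * a k0 ^ β q ≤ 1 := by
      rw [← hβ q]
      exact Finset.single_le_sum
        (fun k _ => le_of_lt (mul_pos (Real.rpow_pos_of_pos (hd0 k) q)
          (Real.rpow_pos_of_pos (ha0 k) _))) (mem_univ k0)
    rw [hterm k0 q (β q), Real.exp_le_one_iff, hk0eq] at h1
    nlinarith [hla k0]
  have he0 : ∀ k, 0 ≤ log |d k| - αmax * log (a k) := fun k => by linarith [hαmax_ge k]
  have hrle : ∀ (q : ℝ) (k : ι), exp (q * log |d k| + β q * log (a k))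
      ≤ exp (q * (log |d k| - αmax * log (a k))) := by
    intro q k
    apply Real.exp_le_exp.2
    have h1 : (αmax * q + β q) * log (a k) ≤ 0 :=
      mul_nonpos_of_nonneg_of_nonpos (hT0 q) (le_of_lt (hla k))
    nlinarith [h1]
  have hub : α0 ≤ α → ∀ q : ℝ, h ≤ α * q + β q := by
    intro hα0α q
    obtain ⟨phat, hph0, hph1, hphC, hphv⟩ := hh.1
    rcases le_or_gt q σ with hqσ | hqσ
    · have ht : 0 ≤ q + β q := by linarith [hβ_ge2 q hqσ]
      rw [hphv]; exact hweak q ht phat hph0 hph1 hphC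
    · have h1 := hβ_ge q
      have h2 : 0 ≤ (α - α0) * (q - σ) := mul_nonneg (by linarith) (by linarith)
      nlinarith [h_le_sig]
  have hhle : α0 ≤ α → h ≤ βstar := by
    intro hα0α
    refine hβstar.2 ?_
    rintro x ⟨q, rfl⟩
    exact hub hα0α q
  refine ⟨part1, ?_⟩
  intro hα0α hααmax
  apply le_antisymm (hhle hα0α)
  set G : ℝ → ℝ := fun q => ∑ k, exp (q * log |d k| + β q * log (a k)) *
      (log |d k| - α * log (a k)) with hGdef
  have hβc := beta_continuous a d β ha hd0 hβ
  have hGcont : Continuous G := by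
    apply continuous_finset_sum
    intro k _
    exact (((continuous_id.mul continuous_const).add (hβc.mul continuous_const)).rexp).mul
      continuous_const
  have hGσ : 0 ≤ G σ := by
    have hGe : G σ = ∑ k, pstar k * (log |d k| - α * log (a k)) := by
      simp only [hGdef]
      exact Finset.sum_congr rfl fun k _ => by rw [hrσ k]
    rw [hGe, hsplit pstar α, hSd_eq]
    nlinarith [hSa_neg]
  rcases lt_or_eq_of_le hααmax with hlt | heq
  · -- case α < αmax : intermediate value theorem
    obtain ⟨kM, -, hkM⟩ := Finset.exists_max_image univ a univ_nonempty
    have hδpos : 0 < (αmax - α) * (-log (a kM)) := mul_pos (by linarith) (by linarith [hla kM])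
    have htend := tendsto_sum_exp (univ.filter fun k => ¬(log |d k| - αmax * log (a k) = 0))
        (fun k => log |d k| - αmax * log (a k)) (fun k => log |d k| - αmax * log (a k))
        (fun k hk => lt_of_le_of_ne (he0 k) (Ne.symm (Finset.mem_filter.1 hk).2))
    obtain ⟨qb, hqb1, hqb2⟩ :=
      ((htend.eventually_lt_const hδpos).and (eventually_le_atBot σ)).exists
    have hfull : ∑ k ∈ univ.filter (fun k => ¬(log |d k| - αmax * log (a k) = 0)),
          (log |d k| - αmax * log (a k)) * exp (qb * (log |d k| - αmax * log (a k)))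
        = ∑ k, (log |d k| - αmax * log (a k)) * exp (qb * (log |d k| - αmax * log (a k))) := by
      apply Finset.sum_filter_of_ne
      intro k _ hfk h0
      exact hfk (by rw [h0, zero_mul])
    have hA : ∑ k, (log |d k| - αmax * log (a k)) * exp (qb * (log |d k| - αmax * log (a k)))
        < (αmax - α) * (-log (a kM)) := by
      rw [← hfull]; exact hqb1
    have hGqb : G qb ≤ 0 := by
      have hbound : ∀ k, exp (qb * log |d k| + β qb * log (a k)) * (log |d k| - α * log (a k))
          ≤ (log |d k| - αmax * log (a k)) * exp (qb * (log |d k| - αmax * log (a k)))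
            + (αmax - α) * (exp (qb * log |d k| + β qb * log (a k)) * log (a k)) := by
        intro k
        have hr := hrle qb k
        have h1 : exp (qb * log |d k| + β qb * log (a k)) * (log |d k| - αmax * log (a k))
            ≤ (log |d k| - αmax * log (a k)) * exp (qb * (log |d k| - αmax * log (a k))) := by
          rw [mul_comm]
          exact mul_le_mul_of_nonneg_left hr (he0 k)
        nlinarith [h1]
      have hsumle := Finset.sum_le_sum (fun k (_ : k ∈ (univ : Finset ι)) => hbound k)
      have hrla : ∑ k, exp (qb * log |d k| + β qb * log (a k)) * log (a k) ≤ log (a kM) := by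
        calc ∑ k, exp (qb * log |d k| + β qb * log (a k)) * log (a k)
            ≤ ∑ k, exp (qb * log |d k| + β qb * log (a k)) * log (a kM) :=
              Finset.sum_le_sum fun k _ => mul_le_mul_of_nonneg_left
                (Real.log_le_log (ha0 k) (hkM k (mem_univ k))) (Real.exp_pos _).le
          _ = (∑ k, exp (qb * log |d k| + β qb * log (a k))) * log (a kM) := by
              rw [Finset.sum_mul]
          _ = log (a kM) := by rw [hβexp qb, one_mul]
      have hsplit2 : ∑ k, ((log |d k| - αmax * log (a k)) *
            exp (qb * (log |d k| - αmax * log (a k)))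
            + (αmax - α) * (exp (qb * log |d k| + β qb * log (a k)) * log (a k)))
          = (∑ k, (log |d k| - αmax * log (a k)) * exp (qb * (log |d k| - αmax * log (a k))))
            + (αmax - α) * ∑ k, exp (qb * log |d k| + β qb * log (a k)) * log (a k) := by
        rw [Finset.sum_add_distrib, Finset.mul_sum]
      have h2 : (αmax - α) * (∑ k, exp (qb * log |d k| + β qb * log (a k)) * log (a k))
          ≤ (αmax - α) * log (a kM) := mul_le_mul_of_nonneg_left hrla (by linarith)
      simp only [hGdef]
      linarith [hsumle, hsplit2, hA, h2]
    obtain ⟨qd, -, hqd⟩ :=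
      intermediate_value_Icc hqb2 hGcont.continuousOn (Set.mem_Icc.2 ⟨hGqb, hGσ⟩)
    simp only [hGdef] at hqd
    set p : ι → ℝ := fun k => exp (qd * log |d k| + β qd * log (a k)) with hpdef
    have hp0 : ∀ k, 0 ≤ p k := fun k => (Real.exp_pos _).le
    have hp1 : ∑ k, p k = 1 := hβexp qd
    have hpC : ∑ k, p k * (log |d k| - α * log (a k)) ≤ 0 := le_of_eq hqd
    have hlogp : ∀ k, log (p k) = qd * log |d k| + β qd * log (a k) := fun k => Real.log_exp _
    have hE : ∑ k, p k * log (p k)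
        = qd * (∑ k, p k * log |d k|) + β qd * (∑ k, p k * log (a k)) := by
      rw [Finset.mul_sum, Finset.mul_sum, ← Finset.sum_add_distrib]
      exact Finset.sum_congr rfl fun k _ => by rw [hlogp k]; ring
    have hLd : ∑ k, p k * log |d k| = α * ∑ k, p k * log (a k) := by
      have h1 := hsplit p α
      rw [hqd] at h1
      linarith
    have hD := hDneg p hp0 hp1
    have hDval : ∑ k, p k * (log |d k| - log (a k)) = (α - 1) * ∑ k, p k * log (a k) := by
      have h1 := hsplit1 p
      linarith [hLd]
    have hyeq : ((α - 1) * ∑ k, p k * log (p k)) / (∑ k, p k * (log |d k| - log (a k)))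
        = α * qd + β qd := by
      rw [div_eq_iff (ne_of_lt hD), hE, hDval, hLd]
      ring
    have hmem : α * qd + β qd ∈ {y : ℝ | ∃ p : ι → ℝ, (∀ k, 0 ≤ p k) ∧ ∑ k, p k = 1 ∧
        ∑ k, p k * (Real.log |d k| - α * Real.log (a k)) ≤ 0 ∧
        y = ((α - 1) * ∑ k, p k * Real.log (p k)) /
          (∑ k, p k * (Real.log |d k| - Real.log (a k)))} :=
      ⟨p, hp0, hp1, hpC, hyeq.symm⟩
    exact le_trans (hβstar.1 ⟨qd, rfl⟩) (hh.2 hmem)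
  · -- case α = αmax
    subst heq
    apply le_of_forall_pos_le_add
    intro ε hε
    set Ks := univ.filter (fun k => log |d k| - α * log (a k) = 0) with hKsdef
    have hk0K : k0 ∈ Ks := Finset.mem_filter.2 ⟨mem_univ _, by rw [hk0eq]; ring⟩
    obtain ⟨kK, hkKmem, hkK⟩ := Finset.exists_max_image Ks a ⟨k0, hk0K⟩
    have haKε : a kK ^ (ε:ℝ) < 1 := Real.rpow_lt_one (le_of_lt (ha0 kK)) (ha kK).2 hε
    have htend := tendsto_sum_exp (univ.filter fun k => ¬(log |d k| - α * log (a k) = 0))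
        (fun k => log |d k| - α * log (a k)) (fun _ => (1:ℝ))
        (fun k hk => lt_of_le_of_ne (he0 k) (Ne.symm (Finset.mem_filter.1 hk).2))
    obtain ⟨qt, hqt⟩ :=
      (htend.eventually_lt_const (by linarith : (0:ℝ) < 1 - a kK ^ (ε:ℝ))).exists
    have hqt' : ∑ k ∈ univ.filter (fun k => ¬(log |d k| - α * log (a k) = 0)),
        exp (qt * (log |d k| - α * log (a k))) < 1 - a kK ^ (ε:ℝ) := by
      have h1 : ∑ k ∈ univ.filter (fun k => ¬(log |d k| - α * log (a k) = 0)),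
          exp (qt * (log |d k| - α * log (a k)))
          = ∑ k ∈ univ.filter (fun k => ¬(log |d k| - α * log (a k) = 0)),
            (1:ℝ) * exp (qt * (log |d k| - α * log (a k))) := by
        exact Finset.sum_congr rfl fun k _ => by rw [one_mul]
      rw [h1]; exact hqt
    set R := ∑ k ∈ Ks, exp (qt * log |d k| + β qt * log (a k)) with hRdef
    have hRpos : 0 < R := Finset.sum_pos (fun k _ => Real.exp_pos _) ⟨k0, hk0K⟩
    have hpart : R + ∑ k ∈ univ.filter (fun k => ¬(log |d k| - α * log (a k) = 0)),
        exp (qt * log |d k| + β qt * log (a k)) = 1 := by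
      rw [hRdef, hKsdef, Finset.sum_filter_add_sum_filter_not]
      exact hβexp qt
    have hRge : a kK ^ (ε:ℝ) ≤ R := by
      have hsc : ∑ k ∈ univ.filter (fun k => ¬(log |d k| - α * log (a k) = 0)),
          exp (qt * log |d k| + β qt * log (a k))
          ≤ ∑ k ∈ univ.filter (fun k => ¬(log |d k| - α * log (a k) = 0)),
            exp (qt * (log |d k| - α * log (a k))) :=
        Finset.sum_le_sum fun k _ => hrle qt k
      linarith [hqt', hpart, hsc]
    set p : ι → ℝ := fun k => if log |d k| - α * log (a k) = 0
        then exp (qt * log |d k| + β qt * log (a k)) / R else 0 with hpdef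
    have hp0 : ∀ k, 0 ≤ p k := by
      intro k
      simp only [hpdef]
      by_cases hk : log |d k| - α * log (a k) = 0
      · rw [if_pos hk]; exact div_nonneg (Real.exp_pos _).le hRpos.le
      · rw [if_neg hk]
    have hpK0 : ∀ k, k ∉ Ks → p k = 0 := by
      intro k hk
      have hk' : ¬(log |d k| - α * log (a k) = 0) := fun hc =>
        hk (Finset.mem_filter.2 ⟨mem_univ _, hc⟩)
      simp only [hpdef, if_neg hk']
    have hsumK : ∀ f : ι → ℝ, ∑ k, p k * f k = ∑ k ∈ Ks, p k * f k := by
      intro f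
      symm
      apply Finset.sum_subset (Finset.subset_univ _)
      intro k _ hk
      rw [hpK0 k hk, zero_mul]
    have hpKval : ∀ k ∈ Ks, p k = exp (qt * log |d k| + β qt * log (a k)) / R := by
      intro k hk
      simp only [hpdef, if_pos (Finset.mem_filter.1 hk).2]
    have hpKs1 : ∑ k ∈ Ks, p k = 1 := by
      rw [Finset.sum_congr rfl hpKval, ← Finset.sum_div, ← hRdef, div_self (ne_of_gt hRpos)]
    have hscount : ∑ k, p k = ∑ k ∈ Ks, p k := by
      have h1 := hsumK (fun _ => (1:ℝ))
      simpa using h1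
    have hp1 : ∑ k, p k = 1 := by rw [hscount, hpKs1]
    have hpC0 : ∑ k, p k * (log |d k| - α * log (a k)) = 0 := by
      apply Finset.sum_eq_zero
      intro k _
      by_cases hk : log |d k| - α * log (a k) = 0
      · rw [hk, mul_zero]
      · simp only [hpdef, if_neg hk, zero_mul]
    have hD := hDneg p hp0 hp1
    have hLd : ∑ k, p k * log |d k| = α * ∑ k, p k * log (a k) := by
      have h1 := hsplit p α
      rw [hpC0] at h1
      linarith
    have hDval : ∑ k, p k * (log |d k| - log (a k)) = (α - 1) * ∑ k, p k * log (a k) := by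
      have h1 := hsplit1 p
      linarith [hLd]
    have hLa_neg : ∑ k, p k * log (a k) < 0 := by
      by_contra hc
      push_neg at hc
      nlinarith [hD, hDval]
    have hlogp : ∀ k ∈ Ks, log (p k) = (α * qt + β qt) * log (a k) - log R := by
      intro k hk
      have hkeq : log |d k| = α * log (a k) := by
        have h1 := (Finset.mem_filter.1 hk).2
        linarith
      rw [hpKval k hk, Real.log_div (Real.exp_ne_zero _) (ne_of_gt hRpos), Real.log_exp, hkeq]
      ring
    have hE : ∑ k, p k * log (p k)
        = (α * qt + β qt) * (∑ k, p k * log (a k)) - log R := by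
      rw [hsumK (fun k => log (p k))]
      have h2 : ∑ k ∈ Ks, p k * log (p k)
          = ∑ k ∈ Ks, ((α * qt + β qt) * (p k * log (a k)) - log R * p k) := by
        apply Finset.sum_congr rfl
        intro k hk
        rw [hlogp k hk]; ring
      have h3 : ∑ k ∈ Ks, p k * log (a k) = ∑ k, p k * log (a k) := (hsumK _).symm
      rw [h2, Finset.sum_sub_distrib, ← Finset.mul_sum, ← Finset.mul_sum, h3, hpKs1, mul_one]
    have hLa_le : ∑ k, p k * log (a k) ≤ log (a kK) := by
      rw [hsumK (fun k => log (a k))]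
      calc ∑ k ∈ Ks, p k * log (a k) ≤ ∑ k ∈ Ks, p k * log (a kK) :=
          Finset.sum_le_sum fun k hk =>
            mul_le_mul_of_nonneg_left (Real.log_le_log (ha0 k) (hkK k hk)) (hp0 k)
        _ = log (a kK) := by rw [← Finset.sum_mul, hpKs1, one_mul]
    have hlogR_ge : ε * (∑ k, p k * log (a k)) ≤ log R := by
      have h1 : log (a kK ^ (ε:ℝ)) ≤ log R :=
        Real.log_le_log (Real.rpow_pos_of_pos (ha0 kK) _) hRge
      rw [Real.log_rpow (ha0 kK)] at h1
      have h2 := mul_le_mul_of_nonneg_left hLa_le hε.le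
      linarith
    have h9 : α - 1 ≠ 0 := by linarith
    have h10 : (∑ k, p k * log (a k)) ≠ 0 := ne_of_lt hLa_neg
    have hyval : ((α - 1) * ∑ k, p k * log (p k)) / (∑ k, p k * (log |d k| - log (a k)))
        = (α * qt + β qt) - log R / (∑ k, p k * log (a k)) := by
      rw [hE, hDval]
      field_simp
    have hvh : (α * qt + β qt) - log R / (∑ k, p k * log (a k)) ≤ h :=
      hh.2 ⟨p, hp0, hp1, le_of_eq hpC0, hyval.symm⟩
    have hβT : βstar ≤ α * qt + β qt := hβstar.1 ⟨qt, rfl⟩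
    have hratio : log R / (∑ k, p k * log (a k)) ≤ ε := by
      rw [div_le_iff_of_neg hLa_neg]
      linarith [hlogR_ge]
    linarith
end

section
/- In the setting of the previous statement, suppose there exist M > 0 with L_n ≤ M(n − L_n) for all n and δ > 0 with ∑_k s_{n−L_n,k}|log|d_k|| > (1+δ) ∑_k s_{n−L_n,k}|log a_k| for all large n; then γ_2 ≥ 1 + (δ min_k |log a_k|)/(max_k |log a_k| + M |log a_r|) > 1. -/
open Real Finset Filter

theorem stmt_17 (r : ℕ) (hr : 2 ≤ r) (a d : Fin r → ℝ)
    (ha : ∀ k, 0 < a k ∧ a k < 1) (hsum : ∑ k, a k = 1) (hd : ∀ k, |d k| < 1)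
    (rtop : Fin r) (hrtop : (rtop : ℕ) = r - 1)
    (κ : ℕ → Fin r) (hκ : ∀ i, d (κ i) ≠ 0)
    (s : ℕ → Fin r → ℕ)
    (hs : ∀ n k, s n k = ((Finset.Icc 1 n).filter fun i => κ i = k).card)
    (L : ℕ → ℕ)
    (hL : ∀ n, L n = sSup {j | j ≤ n ∧ ∀ i, n - j < i → i ≤ n → κ i = rtop})
    (K2 : ℝ)
    (hK2 : K2 = if d rtop = 0 then 0 else Real.log (a rtop) - Real.log |d rtop|)
    (ζ : ℕ → ℝ) (hζ : ∀ n, ζ n = 0 ∨ ζ n = 1)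
    (γ0 γ2 : ℝ)
    (hγ0 : γ0 = Filter.liminf (fun n =>
      (∑ k, (s n k : ℝ) * Real.log |d k|) /
        (∑ k, (s n k : ℝ) * Real.log (a k))) atTop)
    (hγ2 : γ2 = Filter.liminf (fun n =>
      (∑ k, (s n k : ℝ) * Real.log |d k| + K2 * ζ n * L n) /
        (∑ k, (s n k : ℝ) * Real.log (a k))) atTop)
    (hγ0gt : 1 < γ0)
    (hlimsup : Filter.limsup (fun n => (L n : ℝ) / n) atTop < 1)
    (M : ℝ) (hM : 0 < M) (hML : ∀ n, (L n : ℝ) ≤ M * ((n : ℝ) - L n))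
    (δ : ℝ) (hδ : 0 < δ)
    (hδs : ∀ᶠ n in atTop,
      (1 + δ) * ∑ k, (s (n - L n) k : ℝ) * |Real.log (a k)| <
        ∑ k, (s (n - L n) k : ℝ) * |Real.log (abs (d k))|) :
    1 + δ * (Finset.univ.inf' ⟨rtop, Finset.mem_univ rtop⟩ fun k => |Real.log (a k)|) /
        ((Finset.univ.sup' ⟨rtop, Finset.mem_univ rtop⟩ fun k => |Real.log (a k)|) +
          M * |Real.log (a rtop)|) ≤ γ2 ∧ 1 < γ2 := by
  -- basic positivity
  have hak : ∀ k, 0 < |Real.log (a k)| := by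
    intro k
    have h1 : Real.log (a k) < 0 := Real.log_neg (ha k).1 (ha k).2
    simpa [abs_pos] using h1.ne
  have hloga : ∀ k, Real.log (a k) = -|Real.log (a k)| := by
    intro k
    rw [abs_of_nonpos (Real.log_nonpos (ha k).1.le (ha k).2.le)]; ring
  have hlogd : ∀ k, Real.log |d k| = -abs (Real.log (abs (d k))) := by
    intro k
    rw [abs_of_nonpos (Real.log_nonpos (abs_nonneg _) (hd k).le)]; ring
  set Am := Finset.univ.inf' ⟨rtop, Finset.mem_univ rtop⟩ fun k => |Real.log (a k)| with hAmdef
  set AM := Finset.univ.sup' ⟨rtop, Finset.mem_univ rtop⟩ fun k => |Real.log (a k)| with hAMdef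
  set Cd := Finset.univ.sup' (⟨rtop, Finset.mem_univ rtop⟩ : (Finset.univ : Finset (Fin r)).Nonempty) fun k => abs (Real.log (abs (d k))) with hCddef
  set α := |Real.log (a rtop)| with hαdef
  set β := abs (Real.log (abs (d rtop))) with hβdef
  have hAmpos : 0 < Am := by
    rw [hAmdef]
    exact (Finset.lt_inf'_iff _).mpr fun k _ => hak k
  have hAm_le : ∀ k, Am ≤ |Real.log (a k)| := fun k => by rw [hAmdef]; exact Finset.inf'_le (fun k => |Real.log (a k)|) (Finset.mem_univ k)
  have hle_AM : ∀ k, |Real.log (a k)| ≤ AM := fun k => by rw [hAMdef]; exact Finset.le_sup' (fun k => |Real.log (a k)|) (Finset.mem_univ k)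
  have hle_Cd : ∀ k, abs (Real.log (abs (d k))) ≤ Cd := fun k => by rw [hCddef]; exact Finset.le_sup' (fun k => abs (Real.log (abs (d k)))) (Finset.mem_univ k)
  have hαpos : 0 < α := hak rtop
  have hβ0 : 0 ≤ β := abs_nonneg _
  have hCd0 : 0 ≤ Cd := le_trans hβ0 (hle_Cd rtop)
  have hAmAM : Am ≤ AM := le_trans (hAm_le rtop) (hle_AM rtop)
  have hden : 0 < AM + M * α := by linarith only [mul_pos hM hαpos, hAmpos, hAmAM]
  set c := δ * Am / (AM + M * α) with hcdef
  have hc : c * (AM + M * α) = δ * Am := div_mul_cancel₀ _ hden.ne'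
  have hc0 : 0 < c := div_pos (mul_pos hδ hAmpos) hden
  have hcδ : c ≤ δ := by
    rw [hcdef, div_le_iff₀ hden]
    linarith only [mul_le_mul_of_nonneg_left hAmAM hδ.le, mul_nonneg hδ.le (mul_pos hM hαpos).le]
  -- digit counting
  have hsum_s : ∀ n, ∑ k, s n k = n := by
    intro n
    have h1 : (Finset.Icc 1 n).card = ∑ k : Fin r, ((Finset.Icc 1 n).filter fun i => κ i = k).card :=
      Finset.card_eq_sum_card_fiberwise (fun x _ => Finset.mem_univ (κ x))
    have h2 : ∑ k, s n k = ∑ k : Fin r, ((Finset.Icc 1 n).filter fun i => κ i = k).card :=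
      Finset.sum_congr rfl fun k _ => hs n k
    rw [h2, ← h1, Nat.card_Icc]
    omega
  have hsplit : ∀ n p, n ≤ p → ∀ k,
      s p k = s n k + ((Finset.Icc (n+1) p).filter fun i => κ i = k).card := by
    intro n p hnp k
    rw [hs, hs]
    have hU : Finset.Icc 1 p = Finset.Icc 1 n ∪ Finset.Icc (n+1) p := by
      ext x; simp only [Finset.mem_Icc, Finset.mem_union]; omega
    rw [hU, Finset.filter_union, Finset.card_union_of_disjoint]
    apply Finset.disjoint_filter_filter
    rw [Finset.disjoint_left]
    intro x hx hx'
    simp only [Finset.mem_Icc] at hx hx'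
    omega
  -- L facts
  have hLfact : ∀ n, L n ≤ n ∧ ∀ i, n - L n < i → i ≤ n → κ i = rtop := by
    intro n
    have h0 : (0:ℕ) ∈ {j | j ≤ n ∧ ∀ i, n - j < i → i ≤ n → κ i = rtop} :=
      ⟨Nat.zero_le n, fun i h1 h2 => absurd h2 (by omega)⟩
    have hb : BddAbove {j | j ≤ n ∧ ∀ i, n - j < i → i ≤ n → κ i = rtop} :=
      ⟨n, fun j hj => hj.1⟩
    have hmem := Nat.sSup_mem ⟨0, h0⟩ hb
    rw [← hL n] at hmem
    exact hmem
  -- conversion of signed sums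
  have hA_eq : ∀ n, ∑ k, (s n k : ℝ) * Real.log (a k)
      = -∑ k, (s n k : ℝ) * |Real.log (a k)| := by
    intro n
    have h0 : ∀ k ∈ Finset.univ, (s n k : ℝ) * Real.log (a k) = -((s n k : ℝ) * |Real.log (a k)|) := by
      intro k _
      conv_lhs => rw [hloga k]
      ring
    rw [Finset.sum_congr rfl h0, Finset.sum_neg_distrib]
  have hD_eq : ∀ n, ∑ k, (s n k : ℝ) * Real.log |d k|
      = -∑ k, (s n k : ℝ) * abs (Real.log (abs (d k))) := by
    intro n
    have h0 : ∀ k ∈ Finset.univ, (s n k : ℝ) * Real.log |d k| = -((s n k : ℝ) * abs (Real.log (abs (d k)))) := by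
      intro k _
      conv_lhs => rw [hlogd k]
      ring
    rw [Finset.sum_congr rfl h0, Finset.sum_neg_distrib]
  -- bounds on the sums
  have hsum_cast : ∀ n, ∑ k, (s n k : ℝ) = (n : ℝ) := by
    intro n
    rw [← Nat.cast_sum]
    exact Nat.cast_inj.mpr (hsum_s n)
  have hDa_lb : ∀ n : ℕ, (n : ℝ) * Am ≤ ∑ k, (s n k : ℝ) * |Real.log (a k)| := by
    intro n
    have h1 : ∑ k, (s n k : ℝ) * Am ≤ ∑ k, (s n k : ℝ) * |Real.log (a k)| :=
      Finset.sum_le_sum fun k _ => mul_le_mul_of_nonneg_left (hAm_le k) (Nat.cast_nonneg _)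
    rwa [← Finset.sum_mul, hsum_cast n] at h1
  have hDa_ub : ∀ n : ℕ, ∑ k, (s n k : ℝ) * |Real.log (a k)| ≤ (n : ℝ) * AM := by
    intro n
    have h1 : ∑ k, (s n k : ℝ) * |Real.log (a k)| ≤ ∑ k, (s n k : ℝ) * AM :=
      Finset.sum_le_sum fun k _ => mul_le_mul_of_nonneg_left (hle_AM k) (Nat.cast_nonneg _)
    rwa [← Finset.sum_mul, hsum_cast n] at h1
  have hDd_ub : ∀ n : ℕ, ∑ k, (s n k : ℝ) * abs (Real.log (abs (d k))) ≤ (n : ℝ) * Cd := by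
    intro n
    have h1 : ∑ k, (s n k : ℝ) * abs (Real.log (abs (d k))) ≤ ∑ k, (s n k : ℝ) * Cd :=
      Finset.sum_le_sum fun k _ => mul_le_mul_of_nonneg_left (hle_Cd k) (Nat.cast_nonneg _)
    rwa [← Finset.sum_mul, hsum_cast n] at h1
  -- decomposition across the final run
  have hdecomp : ∀ (w : Fin r → ℝ) n, ∑ k, (s n k : ℝ) * w k
      = (∑ k, (s (n - L n) k : ℝ) * w k) + (L n : ℝ) * w rtop := by
    intro w n
    have h1 := hsplit (n - L n) n (Nat.sub_le n (L n))
    have hcard : ∀ k, (((Finset.Icc (n - L n + 1) n).filter fun i => κ i = k).card : ℝ)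
        = if k = rtop then (L n : ℝ) else 0 := by
      intro k
      by_cases hk : k = rtop
      · subst hk
        rw [if_pos rfl, Finset.filter_true_of_mem]
        · have h2 : n + 1 - (n - L n + 1) = L n := by
            have := (hLfact n).1; omega
          rw [Nat.card_Icc, h2]
        · intro i hi
          simp only [Finset.mem_Icc] at hi
          exact (hLfact n).2 i (by omega) hi.2
      · rw [if_neg hk, Finset.filter_false_of_mem, Finset.card_empty, Nat.cast_zero]
        intro i hi
        simp only [Finset.mem_Icc] at hi
        rw [(hLfact n).2 i (by omega) hi.2]
        exact fun h => hk h.symm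
    calc ∑ k, (s n k : ℝ) * w k
        = ∑ k, ((s (n - L n) k : ℝ) + if k = rtop then (L n : ℝ) else 0) * w k := by
          refine Finset.sum_congr rfl fun k _ => ?_
          rw [h1 k]
          push_cast
          rw [hcard k]
    _ = (∑ k, (s (n - L n) k : ℝ) * w k) + ∑ k, (if k = rtop then (L n : ℝ) else 0) * w k := by
          rw [← Finset.sum_add_distrib]
          exact Finset.sum_congr rfl fun k _ => by ring
    _ = (∑ k, (s (n - L n) k : ℝ) * w k) + (L n : ℝ) * w rtop := by
          congr 1
          simp only [ite_mul, zero_mul]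
          rw [Finset.sum_ite_eq' Finset.univ rtop fun k => (L n : ℝ) * w k]
          simp
  have hdecomp2 : ∀ (w : Fin r → ℝ) (n e : ℕ), n < e → (∀ i, n < i → i < e → κ i = rtop) →
      ∑ k, (s e k : ℝ) * w k
      = (∑ k, (s n k : ℝ) * w k) + ((e - n - 1 : ℕ) : ℝ) * w rtop + w (κ e) := by
    intro w n e hne hmid
    have h1 := hsplit n e hne.le
    have hU : Finset.Icc (n+1) e = Finset.Icc (n+1) (e-1) ∪ {e} := by
      ext x; simp only [Finset.mem_Icc, Finset.mem_union, Finset.mem_singleton]; omega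
    have hcard : ∀ k, (((Finset.Icc (n+1) e).filter fun i => κ i = k).card : ℝ)
        = (if k = rtop then ((e - n - 1 : ℕ) : ℝ) else 0) + (if κ e = k then 1 else 0) := by
      intro k
      rw [hU, Finset.filter_union, Finset.card_union_of_disjoint]
      · have hs1 : (((Finset.Icc (n+1) (e-1)).filter fun i => κ i = k).card : ℝ)
            = if k = rtop then ((e - n - 1 : ℕ) : ℝ) else 0 := by
          by_cases hk : k = rtop
          · subst hk
            rw [if_pos rfl, Finset.filter_true_of_mem]
            · rw [Nat.card_Icc]
              congr 1
              omega
            · intro i hi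
              simp only [Finset.mem_Icc] at hi
              exact hmid i (by omega) (by omega)
          · rw [if_neg hk, Finset.filter_false_of_mem, Finset.card_empty, Nat.cast_zero]
            intro i hi
            simp only [Finset.mem_Icc] at hi
            rw [hmid i (by omega) (by omega)]
            exact fun h => hk h.symm
        have hs2 : ((({e} : Finset ℕ).filter fun i => κ i = k).card : ℝ)
            = if κ e = k then 1 else 0 := by
          by_cases hk : κ e = k
          · rw [if_pos hk]
            rw [Finset.filter_true_of_mem (by simp [hk])]
            simp
          · rw [if_neg hk]
            rw [Finset.filter_false_of_mem (by simp [hk])]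
            simp
        rw [Nat.cast_add, hs1, hs2]
      · apply Finset.disjoint_filter_filter
        rw [Finset.disjoint_left]
        intro x hx hx'
        simp only [Finset.mem_Icc] at hx
        simp only [Finset.mem_singleton] at hx'
        omega
    have hk2 : ∀ k, (s e k : ℝ) = (s n k : ℝ)
        + ((if k = rtop then ((e - n - 1 : ℕ) : ℝ) else 0) + (if κ e = k then 1 else 0)) := by
      intro k
      rw [h1 k, Nat.cast_add, hcard k]
    calc ∑ k, (s e k : ℝ) * w k
        = ∑ k, ((s n k : ℝ) * w k + ((if k = rtop then ((e - n - 1 : ℕ) : ℝ) else 0) * w k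
            + (if κ e = k then 1 else 0) * w k)) :=
          Finset.sum_congr rfl fun k _ => by rw [hk2 k]; ring
    _ = (∑ k, (s n k : ℝ) * w k) + ((∑ k, (if k = rtop then ((e - n - 1 : ℕ) : ℝ) else 0) * w k)
            + ∑ k, (if κ e = k then 1 else 0) * w k) := by
          rw [Finset.sum_add_distrib, Finset.sum_add_distrib]
    _ = (∑ k, (s n k : ℝ) * w k) + ((e - n - 1 : ℕ) : ℝ) * w rtop + w (κ e) := by
          have e1 : ∑ k, (if k = rtop then ((e - n - 1 : ℕ) : ℝ) else 0) * w k
              = ((e - n - 1 : ℕ) : ℝ) * w rtop := by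
            simp only [ite_mul, zero_mul]
            rw [Finset.sum_ite_eq' Finset.univ rtop fun k => ((e - n - 1 : ℕ) : ℝ) * w k]
            simp
          have e2 : ∑ k, (if κ e = k then (1:ℝ) else 0) * w k = w (κ e) := by
            simp only [ite_mul, one_mul, zero_mul]
            rw [Finset.sum_ite_eq Finset.univ (κ e) w]
            simp
          rw [e1, e2]
          ring
  -- every run of the digit rtop eventually ends
  have hstop : ∀ n : ℕ, ∃ p, n < p ∧ κ p ≠ rtop := by
    intro n0
    by_contra hcon
    push_neg at hcon
    have hBig : ∀ p : ℕ, n0 ≤ p → (p - n0 : ℕ) ≤ L p := by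
      intro p hp
      have hmem : p - n0 ∈ {j | j ≤ p ∧ ∀ i, p - j < i → i ≤ p → κ i = rtop} :=
        ⟨by omega, fun i h1 _ => hcon i (by omega)⟩
      rw [hL p]
      exact le_csSup ⟨p, fun j hj => hj.1⟩ hmem
    have h1 : ∀ᶠ p in atTop, (1 : ℝ) - (n0 : ℝ) / p ≤ (L p : ℝ) / p := by
      filter_upwards [eventually_ge_atTop (n0 + 1)] with p hp
      have hLp : ((p - n0 : ℕ) : ℝ) ≤ (L p : ℝ) := by exact_mod_cast hBig p (by omega)
      have hppos : (0 : ℝ) < p := by exact_mod_cast Nat.pos_of_ne_zero (by omega)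
      have hc' : ((p - n0 : ℕ) : ℝ) = (p : ℝ) - n0 := by
        push_cast [Nat.cast_sub (by omega : n0 ≤ p)]
        ring
      have : (1 : ℝ) - (n0 : ℝ) / p = ((p : ℝ) - n0) / p := by field_simp
      rw [this, ← hc']
      exact (div_le_div_iff_of_pos_right hppos).mpr hLp
    have h2 : Tendsto (fun p : ℕ => (1 : ℝ) - (n0 : ℝ) / p) atTop (nhds 1) := by
      have h3 := tendsto_const_div_atTop_nhds_zero_nat (n0 : ℝ)
      have h4 : Tendsto (fun _ : ℕ => (1:ℝ)) atTop (nhds 1) := tendsto_const_nhds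
      simpa using h4.sub h3
    have hboundf : IsBoundedUnder (· ≤ ·) atTop fun p : ℕ => (L p : ℝ) / p := by
      apply isBoundedUnder_of
      refine ⟨1, fun p => ?_⟩
      rcases Nat.eq_zero_or_pos p with hp | hp
      · subst hp
        simp
      · have h5 : (L p : ℝ) ≤ (p : ℝ) := by exact_mod_cast (hLfact p).1
        have h6 : (0:ℝ) < p := by exact_mod_cast hp
        rw [div_le_one h6]
        exact h5
    have h7 : (1 : ℝ) ≤ limsup (fun p : ℕ => (L p : ℝ) / p) atTop := by
      have h8 := Filter.limsup_le_limsup h1 (h2.isCoboundedUnder_le) hboundf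
      rwa [h2.limsup_eq] at h8
    linarith
  -- main eventual lower bound
  have key : ∀ ε : ℝ, 0 < ε → ∀ᶠ n in atTop, 1 + c - ε ≤
      (∑ k, (s n k : ℝ) * Real.log |d k| + K2 * ζ n * L n) /
        (∑ k, (s n k : ℝ) * Real.log (a k)) := by
    intro ε hε
    obtain ⟨N, hN⟩ := eventually_atTop.1 hδs
    obtain ⟨N2, hN2⟩ := exists_nat_ge (Cd / (ε * Am))
    filter_upwards [eventually_ge_atTop (max (max N N2) 1)] with n hn
    rw [Nat.max_le, Nat.max_le] at hn
    obtain ⟨⟨hnN, hnN2⟩, hn1⟩ := hn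
    have hCdn : Cd ≤ ε * (n : ℝ) * Am := by
      have h1 : Cd / (ε * Am) ≤ (n : ℝ) := le_trans hN2 (by exact_mod_cast hnN2)
      have h2 : 0 < ε * Am := mul_pos hε hAmpos
      calc Cd = Cd / (ε * Am) * (ε * Am) := by field_simp
      _ ≤ (n : ℝ) * (ε * Am) := mul_le_mul_of_nonneg_right h1 h2.le
      _ = ε * (n : ℝ) * Am := by ring
    have hδn := hN n hnN
    obtain ⟨hLle, hrun⟩ := hLfact n
    set m := n - L n with hmdef
    set X := ∑ k, (s m k : ℝ) * |Real.log (a k)| with hXdef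
    set Y := ∑ k, (s m k : ℝ) * abs (Real.log (abs (d k))) with hYdef
    have hm1 : 1 ≤ m := by
      by_contra h
      have hLn' : L n = n := by omega
      have h2 := hML n
      rw [hLn', sub_self, mul_zero] at h2
      have h3 : (1 : ℝ) ≤ (n : ℝ) := by exact_mod_cast hn1
      linarith
    have hmcast : (m : ℝ) = (n : ℝ) - (L n : ℝ) := by
      rw [hmdef]
      push_cast [Nat.cast_sub hLle]
      ring
    have hLM : (L n : ℝ) ≤ M * (m : ℝ) := by rw [hmcast]; exact hML n
    have hL0 : (0 : ℝ) ≤ (L n : ℝ) := Nat.cast_nonneg _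
    have hXlb : (m : ℝ) * Am ≤ X := hDa_lb m
    have hXub : X ≤ (m : ℝ) * AM := hDa_ub m
    have hm1' : (1 : ℝ) ≤ (m : ℝ) := by exact_mod_cast hm1
    have hXpos : 0 < X := lt_of_lt_of_le (mul_pos (by linarith only [hm1']) hAmpos) hXlb
    have hDaN := hdecomp (fun k => |Real.log (a k)|) n
    have hDdN := hdecomp (fun k => abs (Real.log (abs (d k)))) n
    rw [← hmdef, ← hXdef, ← hαdef] at hDaN
    rw [← hmdef, ← hYdef, ← hβdef] at hDdN
    have hDanlb : (n : ℝ) * Am ≤ X + (L n : ℝ) * α := by rw [← hDaN]; exact hDa_lb n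
    have hQpos : 0 < X + (L n : ℝ) * α := by linarith only [hXpos, mul_nonneg hL0 hαpos.le]
    have hration : (∑ k, (s n k : ℝ) * Real.log |d k| + K2 * ζ n * L n) /
        (∑ k, (s n k : ℝ) * Real.log (a k))
        = (Y + (L n : ℝ) * β - K2 * ζ n * L n) / (X + (L n : ℝ) * α) := by
      rw [hD_eq n, hA_eq n, hDdN, hDaN]
      rw [show -(Y + (L n : ℝ) * β) + K2 * ζ n * (L n : ℝ)
          = -((Y + (L n : ℝ) * β) - K2 * ζ n * (L n : ℝ)) by ring]
      rw [neg_div_neg_eq]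
    rw [hration, le_div_iff₀ hQpos]
    rcases hζ n with hz | hz
    · -- ζ n = 0
      rw [hz]
      simp only [mul_zero, zero_mul, sub_zero]
      rcases le_or_gt ((1 + δ) * α) β with hbig | hsmall
      · have h5 : (L n : ℝ) * ((1 + δ) * α) ≤ (L n : ℝ) * β :=
          mul_le_mul_of_nonneg_left hbig hL0
        have h6 : (1 + c - ε) * (X + (L n : ℝ) * α) ≤ (1 + δ) * (X + (L n : ℝ) * α) :=
          mul_le_mul_of_nonneg_right (by linarith) hQpos.le
        linarith only [h5, h6, hδn]
      · -- β < (1+δ)α : use the end of the current run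
        obtain ⟨p, hp⟩ := hstop n
        have hexE : ∃ p, n < p ∧ κ p ≠ rtop := ⟨p, hp⟩
        have hspec := Nat.find_spec hexE
        set e := Nat.find hexE with hedef
        obtain ⟨hne, hκe⟩ := hspec
        have hmid : ∀ i, n < i → i < e → κ i = rtop := by
          intro i h1 h2
          have h3 := Nat.find_min hexE h2
          push_neg at h3
          exact h3 h1
        have hLe : L e = 0 := by
          by_contra h
          exact hκe ((hLfact e).2 e (by omega) le_rfl)
        have hδe := hN e (by omega)
        rw [hLe, Nat.sub_zero] at hδe
        have hDaE := hdecomp2 (fun k => |Real.log (a k)|) n e hne hmid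
        have hDdE := hdecomp2 (fun k => abs (Real.log (abs (d k)))) n e hne hmid
        rw [← hαdef] at hDaE
        rw [← hβdef] at hDdE
        rw [hDaN] at hDaE
        rw [hDdN] at hDdE
        rw [hDaE, hDdE] at hδe
        have hE0 : (0 : ℝ) ≤ ((e - n - 1 : ℕ) : ℝ) := Nat.cast_nonneg _
        have hαe0 : 0 ≤ |Real.log (a (κ e))| := abs_nonneg _
        have hβeCd : abs (Real.log (abs (d (κ e)))) ≤ Cd := hle_Cd (κ e)
        have hεQ : ε * ((n : ℝ) * Am) ≤ ε * (X + (L n : ℝ) * α) :=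
          mul_le_mul_of_nonneg_left hDanlb hε.le
        have hcQ : c * (X + (L n : ℝ) * α) ≤ δ * (X + (L n : ℝ) * α) :=
          mul_le_mul_of_nonneg_right hcδ hQpos.le
        have hrunpos : (0 : ℝ) ≤ ((e - n - 1 : ℕ) : ℝ) * ((1 + δ) * α - β) :=
          mul_nonneg hE0 (by linarith)
        have hαe1 : (0 : ℝ) ≤ (1 + δ) * |Real.log (a (κ e))| :=
          mul_nonneg (by linarith) hαe0
        linarith only [hδe, hrunpos, hαe1, hεQ, hcQ, hCdn, hβeCd]
    · -- ζ n = 1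
      rw [hz]
      by_cases hdr : d rtop = 0
      · have hK20 : K2 = 0 := by rw [hK2, if_pos hdr]
        have hLn0 : L n = 0 := by
          by_contra h
          exact (hrun n (by omega) le_rfl ▸ hκ n) hdr
        rw [hK20, hLn0]
        simp only [Nat.cast_zero, mul_zero, zero_mul, mul_one, add_zero, sub_zero]
        linarith only [hδn, mul_le_mul_of_nonneg_right (show (1 + c - ε) ≤ 1 + δ by linarith only [hcδ, hε]) hXpos.le]
      · have hK2' : K2 = β - α := by
          rw [hK2, if_neg hdr, hloga rtop, hlogd rtop]
          ring
        rw [hK2']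
        have hkey2 : c * (X + (L n : ℝ) * α) ≤ δ * X := by
          have k2 : Am * (L n : ℝ) ≤ Am * (M * (m : ℝ)) := mul_le_mul_of_nonneg_left hLM hAmpos.le
          have k2' := mul_le_mul_of_nonneg_right k2 hαpos.le
          have k3 : (M * α) * ((m : ℝ) * Am) ≤ (M * α) * X :=
            mul_le_mul_of_nonneg_left hXlb (mul_nonneg hM.le hαpos.le)
          have k1 : Am * ((L n : ℝ) * α) ≤ M * α * X := by linarith only [k2', k3]
          have k6 : Am * X ≤ AM * X := mul_le_mul_of_nonneg_right hAmAM hXpos.le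
          have k4 : c * (X + (L n : ℝ) * α) * (AM + M * α) ≤ δ * X * (AM + M * α) := by
            have k5 : c * (X + (L n : ℝ) * α) * (AM + M * α)
                = δ * (Am * X) + δ * (Am * ((L n : ℝ) * α)) := by
              rw [show c * (X + (L n : ℝ) * α) * (AM + M * α)
                  = (c * (AM + M * α)) * (X + (L n : ℝ) * α) by ring, hc]
              ring
            linarith only [k5, mul_le_mul_of_nonneg_left k1 hδ.le, mul_le_mul_of_nonneg_left k6 hδ.le]
          exact le_of_mul_le_mul_right k4 hden
        have hε2 : 0 ≤ ε * (X + (L n : ℝ) * α) := mul_nonneg hε.le hQpos.le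
        linarith only [hδn, hkey2, hε2]
  -- upper bound, for coboundedness
  have hupper : ∀ᶠ n in atTop, (∑ k, (s n k : ℝ) * Real.log |d k| + K2 * ζ n * L n) /
      (∑ k, (s n k : ℝ) * Real.log (a k)) ≤ (Cd + |K2|) / Am := by
    filter_upwards [eventually_ge_atTop 1] with n hn1
    have hn1' : (1 : ℝ) ≤ (n : ℝ) := by exact_mod_cast hn1
    have hSpos : (0 : ℝ) < ∑ k, (s n k : ℝ) * |Real.log (a k)| := by
      have h0 : (0:ℝ) < (n : ℝ) * Am := mul_pos (by linarith only [hn1']) hAmpos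
      linarith only [h0, hDa_lb n]
    have hnum : ∑ k, (s n k : ℝ) * Real.log |d k| + K2 * ζ n * L n
        = -(∑ k, (s n k : ℝ) * abs (Real.log (abs (d k))) - K2 * ζ n * L n) := by
      rw [hD_eq n]
      ring
    rw [hnum, hA_eq n, neg_div_neg_eq, div_le_iff₀ hSpos]
    have h2 : ∑ k, (s n k : ℝ) * abs (Real.log (abs (d k))) ≤ (n : ℝ) * Cd := hDd_ub n
    have h3 : -(K2 * ζ n * (L n : ℝ)) ≤ |K2| * (n : ℝ) := by
      rcases hζ n with hz | hz
      · rw [hz]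
        simp only [mul_zero, zero_mul, neg_zero]
        exact mul_nonneg (abs_nonneg _) (by linarith)
      · rw [hz, mul_one]
        have h4 : -(K2 * (L n : ℝ)) ≤ |K2 * (L n : ℝ)| := neg_le_abs _
        have h5 : |K2 * (L n : ℝ)| = |K2| * (L n : ℝ) := by
          rw [abs_mul, Nat.abs_cast]
        have h6 : (L n : ℝ) ≤ (n : ℝ) := by exact_mod_cast (hLfact n).1
        linarith only [h4, h5, mul_le_mul_of_nonneg_left h6 (abs_nonneg K2)]
    have h7 : 0 ≤ (Cd + |K2|) / Am := div_nonneg (by linarith [abs_nonneg K2]) hAmpos.le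
    have h8 : ((Cd + |K2|) / Am) * ((n : ℝ) * Am) ≤ ((Cd + |K2|) / Am) * ∑ k, (s n k : ℝ) * |Real.log (a k)| :=
      mul_le_mul_of_nonneg_left (hDa_lb n) h7
    have h9 : ((Cd + |K2|) / Am) * ((n : ℝ) * Am) = (n : ℝ) * (Cd + |K2|) := by
      field_simp
    linarith
  have hτ2 : ∀ ε : ℝ, 0 < ε → 1 + c - ε ≤ γ2 := by
    intro ε hε
    rw [hγ2]
    exact le_liminf_of_le (IsCoboundedUnder.of_frequently_le hupper.frequently) (key ε hε)
  have hfinal : 1 + c ≤ γ2 := by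
    by_contra h
    push_neg at h
    have := hτ2 ((1 + c - γ2) / 2) (by linarith)
    linarith
  exact ⟨hfinal, by linarith [hc0, hfinal]⟩
end
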